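/- arXiv:1405.5659 — 5 statements merged into one kernel-verified Lean document; each statement's English description precedes it below -/
import Mathlib

section
/- Let ζ ∈ {1, i, -i}, a > 0, and g integrable on (a,∞). If u ∈ C²([a,∞)) satisfies the integral equation u(x) = e^{ζx} + (1/(2ζ))·∫ₐ^x (e^{ζ(x-s)} - e^{-ζ(x-s)})·g(s)·u(s) ds for all x ∈ [a,∞), then the function z(x) := e^{-ζx}·u(x) satisfies |z(x)| ≤ exp(∫ₐ^x |g(r)| dr) for all x ∈ [a,∞). -/
open Set Filter MeasureTheory
open scoped Topology

lemma gronwall_eps (a b : ℝ) (hab : a ≤ b) (h φ : ℝ → ℝ)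
    (hh : IntegrableOn h (Ioc a b)) (hhnn : ∀ s, 0 ≤ h s)
    (hφc : ContinuousOn φ (Icc a b)) (hφnn : ∀ s, 0 ≤ φ s)
    (hineq : ∀ t ∈ Icc a b, φ t ≤ 1 + ∫ s in a..t, h s * φ s)
    (M : ℝ) (hM0 : 0 ≤ M) (hM : ∀ t ∈ Icc a b, φ t ≤ M)
    (ε : ℝ) (hε : 0 < ε) :
    φ b ≤ (1 + M * ε) * Real.exp ε * Real.exp (∫ s in a..b, h s) := by
  classical
  set h₀ : ℝ → ℝ := (Ioc a b).indicator h with hh₀def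
  have hh₀ : Integrable h₀ := (integrable_indicator_iff measurableSet_Ioc).2 hh
  have hh₀nn : ∀ s, 0 ≤ h₀ s := fun s => Set.indicator_nonneg (fun t _ => hhnn t) s
  obtain ⟨f, -, hfe, hfc, hfi⟩ := hh₀.exists_hasCompactSupport_integral_sub_le hε
  set hc : ℝ → ℝ := fun t => max (f t) 0 with hcdef
  have hcc : Continuous hc := hfc.max continuous_const
  have hcnn : ∀ s, 0 ≤ hc s := fun s => le_max_right _ _
  have hci : Integrable hc := hfi.pos_part
  have hptw : ∀ s, |h₀ s - hc s| ≤ |h₀ s - f s| := by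
    intro s
    rcases le_or_gt 0 (f s) with hf0 | hf0
    · simp [hcdef, max_eq_left hf0]
    · have : hc s = 0 := max_eq_right hf0.le
      rw [this, sub_zero, abs_of_nonneg (hh₀nn s), abs_sub_comm, abs_of_nonpos (by linarith [hh₀nn s])]
      linarith [hh₀nn s]
  have key1 : ∫ s, |h₀ s - hc s| ≤ ε := by
    have h1 : ∫ s, |h₀ s - hc s| ≤ ∫ s, |h₀ s - f s| :=
      integral_mono ((hh₀.sub hci).abs) ((hh₀.sub hfi).abs) hptw
    have h2 : ∫ s, |h₀ s - f s| ≤ ε := by simpa [Real.norm_eq_abs] using hfe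
    linarith
  -- on Ioc a b, h₀ = h
  have h₀eq : ∀ s ∈ Ioc a b, h₀ s = h s := fun s hs => Set.indicator_of_mem hs h
  have key2 : ∀ t ∈ Icc a b, ∫ s in a..t, |h s - hc s| ≤ ε := by
    intro t ht
    rw [intervalIntegral.integral_of_le ht.1]
    have e1 : ∫ s in Ioc a t, |h s - hc s| = ∫ s in Ioc a t, |h₀ s - hc s| := by
      refine setIntegral_congr_fun measurableSet_Ioc (fun s hs => ?_)
      rw [h₀eq s (Ioc_subset_Ioc_right ht.2 hs)]
    rw [e1]
    refine le_trans (setIntegral_le_integral ((hh₀.sub hci).abs) ?_) key1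
    exact Eventually.of_forall fun s => abs_nonneg _
  have subIoc : ∀ t, t ∈ Icc a b → Ioc a t ⊆ Ioc a b := fun t ht => Ioc_subset_Ioc_right ht.2
  have int_hφ : ∀ t ∈ Icc a b, IntervalIntegrable (fun s => h s * φ s) volume a t := by
    intro t ht
    rw [intervalIntegrable_iff_integrableOn_Ioc_of_le ht.1]
    have hmφ : AEStronglyMeasurable φ (volume.restrict (Ioc a t)) :=
      (hφc.mono (Ioc_subset_Icc_self.trans (Icc_subset_Icc_right ht.2))).aestronglyMeasurable
        measurableSet_Ioc
    have hmh : AEStronglyMeasurable h (volume.restrict (Ioc a t)) :=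
      hh.1.mono_set (subIoc t ht)
    refine Integrable.mono' ((hh.mono_set (subIoc t ht)).const_mul M) (hmh.mul hmφ) ?_
    filter_upwards [ae_restrict_mem measurableSet_Ioc] with s hs
    rw [Real.norm_eq_abs, abs_of_nonneg (mul_nonneg (hhnn s) (hφnn s))]
    calc h s * φ s ≤ h s * M := mul_le_mul_of_nonneg_left
          (hM s ⟨hs.1.le, hs.2.trans ht.2⟩) (hhnn s)
      _ = M * h s := mul_comm _ _
  have int_hcφ : ∀ t ∈ Icc a b, IntervalIntegrable (fun s => hc s * φ s) volume a t := by
    intro t ht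
    apply ContinuousOn.intervalIntegrable
    rw [uIcc_of_le ht.1]
    exact hcc.continuousOn.mul (hφc.mono (Icc_subset_Icc_right ht.2))
  have int_absdiff : ∀ t ∈ Icc a b, IntervalIntegrable (fun s => |h s - hc s|) volume a t := by
    intro t ht
    rw [intervalIntegrable_iff_integrableOn_Ioc_of_le ht.1]
    exact ((hh.mono_set (subIoc t ht)).sub hci.integrableOn).abs
  set F : ℝ → ℝ := fun t => ∫ s in a..t, hc s * φ s with hF
  set B : ℝ → ℝ := fun t => 1 + M * ε + F t with hB
  have hφB : ∀ t ∈ Icc a b, φ t ≤ B t := by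
    intro t ht
    have h1 := hineq t ht
    have h2 : (∫ s in a..t, h s * φ s) - (∫ s in a..t, hc s * φ s)
        = ∫ s in a..t, (h s * φ s - hc s * φ s) :=
      (intervalIntegral.integral_sub (int_hφ t ht) (int_hcφ t ht)).symm
    have h3 : ∫ s in a..t, (h s * φ s - hc s * φ s) ≤ ∫ s in a..t, |h s - hc s| * M := by
      apply intervalIntegral.integral_mono_on ht.1 ((int_hφ t ht).sub (int_hcφ t ht))
        ((int_absdiff t ht).mul_const M)
      intro s hs
      have hr : h s * φ s - hc s * φ s = (h s - hc s) * φ s := by ring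
      rw [hr]
      calc (h s - hc s) * φ s ≤ |h s - hc s| * φ s :=
            mul_le_mul_of_nonneg_right (le_abs_self _) (hφnn s)
        _ ≤ |h s - hc s| * M :=
            mul_le_mul_of_nonneg_left (hM s ⟨hs.1, hs.2.trans ht.2⟩) (abs_nonneg _)
    have h4 : ∫ s in a..t, |h s - hc s| * M = (∫ s in a..t, |h s - hc s|) * M :=
      intervalIntegral.integral_mul_const M _
    have h5 : (∫ s in a..t, |h s - hc s|) * M ≤ ε * M :=
      mul_le_mul_of_nonneg_right (key2 t ht) hM0
    have : φ t ≤ 1 + M * ε + ∫ s in a..t, hc s * φ s := by linarith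
    simpa [hB, hF] using this
  set H : ℝ → ℝ := fun t => ∫ s in a..t, hc s with hHdef
  set ψ : ℝ → ℝ := fun t => B t * Real.exp (-(H t)) with hψdef
  have hHcont : Continuous H :=
    intervalIntegral.continuous_primitive (fun c d => hcc.intervalIntegrable c d) a
  have hFcont : ContinuousOn F (Icc a b) := by
    have hi : IntegrableOn (fun s => hc s * φ s) (uIcc a b) volume := by
      rw [uIcc_of_le hab]; exact (hcc.continuousOn.mul hφc).integrableOn_Icc
    have := intervalIntegral.continuousOn_primitive_interval hi
    rwa [uIcc_of_le hab] at this
  have hBcont : ContinuousOn B (Icc a b) := continuousOn_const.add hFcont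
  have hψcont : ContinuousOn ψ (Icc a b) :=
    hBcont.mul (Real.continuous_exp.comp hHcont.neg).continuousOn
  have hder : ∀ t ∈ Ioo a b, HasDerivAt ψ (Real.exp (-(H t)) * (hc t * (φ t - B t))) t := by
    intro t ht
    have htIcc : t ∈ Icc a b := ⟨ht.1.le, ht.2.le⟩
    have hFd : HasDerivAt F (hc t * φ t) t := by
      refine intervalIntegral.integral_hasDerivAt_right (int_hcφ t htIcc)
        ⟨Icc a b, Icc_mem_nhds ht.1 ht.2,
          (hcc.continuousOn.mul hφc).aestronglyMeasurable measurableSet_Icc⟩ ?_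
      exact hcc.continuousAt.mul (hφc.continuousAt (Icc_mem_nhds ht.1 ht.2))
    have hBd : HasDerivAt B (hc t * φ t) t := hFd.const_add _
    have hHd : HasDerivAt H (hc t) t :=
      intervalIntegral.integral_hasDerivAt_right (hcc.intervalIntegrable a t)
        hcc.stronglyMeasurable.stronglyMeasurableAtFilter hcc.continuousAt
    have hEd : HasDerivAt (fun r => Real.exp (-(H r))) (Real.exp (-(H t)) * -hc t) t :=
      hHd.neg.exp
    have hmul : HasDerivAt (fun r => B r * Real.exp (-(H r))) _ t := hBd.mul hEd
    convert hmul using 1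
    ring
  have hanti : AntitoneOn ψ (Icc a b) := by
    apply antitoneOn_of_deriv_nonpos (convex_Icc a b) hψcont
    · intro t ht
      rw [interior_Icc] at ht
      exact (hder t ht).differentiableAt.differentiableWithinAt
    · intro t ht
      rw [interior_Icc] at ht
      rw [(hder t ht).deriv]
      refine mul_nonpos_of_nonneg_of_nonpos (Real.exp_nonneg _)
        (mul_nonpos_of_nonneg_of_nonpos (hcnn t) ?_)
      exact sub_nonpos.2 (hφB t ⟨ht.1.le, ht.2.le⟩)
  have hψab : ψ b ≤ ψ a := hanti ⟨le_rfl, hab⟩ ⟨hab, le_rfl⟩ hab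
  have hψa : ψ a = 1 + M * ε := by
    simp [hψdef, hB, hF, hHdef, intervalIntegral.integral_same]
  have hBb : B b ≤ (1 + M * ε) * Real.exp (H b) := by
    have hb1 : B b * Real.exp (-(H b)) ≤ 1 + M * ε := hψa ▸ hψab
    calc B b = B b * Real.exp (-(H b)) * Real.exp (H b) := by
          rw [mul_assoc, ← Real.exp_add]; simp
      _ ≤ (1 + M * ε) * Real.exp (H b) :=
          mul_le_mul_of_nonneg_right hb1 (Real.exp_nonneg _)
  have int_h : IntervalIntegrable h volume a b := by
    rw [intervalIntegrable_iff_integrableOn_Ioc_of_le hab]; exact hh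
  have hHb : H b ≤ ε + ∫ s in a..b, h s := by
    have h6 : (∫ s in a..b, hc s) - (∫ s in a..b, h s) = ∫ s in a..b, (hc s - h s) :=
      (intervalIntegral.integral_sub (hcc.intervalIntegrable a b) int_h).symm
    have h7 : ∫ s in a..b, (hc s - h s) ≤ ∫ s in a..b, |h s - hc s| := by
      apply intervalIntegral.integral_mono_on hab
        ((hcc.intervalIntegrable a b).sub int_h) (int_absdiff b ⟨hab, le_rfl⟩)
      intro s hs
      rw [abs_sub_comm]
      exact le_abs_self _
    have := key2 b ⟨hab, le_rfl⟩
    simp only [hHdef]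
    linarith
  calc φ b ≤ B b := hφB b ⟨hab, le_rfl⟩
    _ ≤ (1 + M * ε) * Real.exp (H b) := hBb
    _ ≤ (1 + M * ε) * Real.exp (ε + ∫ s in a..b, h s) := by
        apply mul_le_mul_of_nonneg_left (Real.exp_le_exp.2 hHb)
        positivity
    _ = (1 + M * ε) * Real.exp ε * Real.exp (∫ s in a..b, h s) := by
        rw [Real.exp_add, mul_assoc]


lemma gronwall_integral (a b : ℝ) (hab : a ≤ b) (h φ : ℝ → ℝ)
    (hh : IntegrableOn h (Ioc a b)) (hhnn : ∀ s, 0 ≤ h s)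
    (hφc : ContinuousOn φ (Icc a b)) (hφnn : ∀ s, 0 ≤ φ s)
    (hineq : ∀ t ∈ Icc a b, φ t ≤ 1 + ∫ s in a..t, h s * φ s) :
    φ b ≤ Real.exp (∫ s in a..b, h s) := by
  obtain ⟨c, hcmem, hmax⟩ := isCompact_Icc.exists_isMaxOn (nonempty_Icc.2 hab) hφc
  set M := φ c with hMdef
  have hM0 : 0 ≤ M := hφnn c
  have hM : ∀ t ∈ Icc a b, φ t ≤ M := fun t ht => hmax ht
  set I := ∫ s in a..b, h s with hIdef
  have key : ∀ ε : ℝ, 0 < ε → φ b ≤ (1 + M * ε) * Real.exp ε * Real.exp I :=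
    fun ε hε => gronwall_eps a b hab h φ hh hhnn hφc hφnn hineq M hM0 hM ε hε
  have hcont : Tendsto (fun ε : ℝ => (1 + M * ε) * Real.exp ε * Real.exp I) (𝓝[>] 0)
      (𝓝 ((1 + M * 0) * Real.exp 0 * Real.exp I)) := by
    apply Tendsto.mono_left _ nhdsWithin_le_nhds
    exact (Continuous.tendsto (by continuity) 0)
  simp only [mul_zero, add_zero, Real.exp_zero, mul_one, one_mul] at hcont
  refine ge_of_tendsto hcont ?_
  filter_upwards [self_mem_nhdsWithin] with ε hε
  exact key ε hε

lemma ker_abs (ζ : ℂ) (hζ : ζ = 1 ∨ ζ = Complex.I ∨ ζ = -Complex.I) (s t : ℝ) (hst : s ≤ t) :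
    ‖(1 - Complex.exp (2 * ζ * ((s : ℂ) - (t : ℂ)))) / (2 * ζ)‖ ≤ 1 := by
  have habs2 : ‖2 * ζ‖ = 2 := by
    rcases hζ with rfl | rfl | rfl <;> simp
  have hre : (2 * ζ * ((s : ℂ) - (t : ℂ))).re ≤ 0 := by
    rcases hζ with rfl | rfl | rfl <;>
      simp [Complex.mul_re, Complex.sub_re, Complex.sub_im, Complex.I_re, Complex.I_im] <;>
      nlinarith [hst]
  have hE : ‖Complex.exp (2 * ζ * ((s : ℂ) - (t : ℂ)))‖ ≤ 1 := by
    rw [Complex.norm_exp]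
    exact Real.exp_le_one_iff.2 hre
  rw [norm_div, habs2]
  rw [div_le_one (by norm_num)]
  calc ‖1 - Complex.exp (2 * ζ * ((s : ℂ) - (t : ℂ)))‖
      ≤ ‖(1 : ℂ)‖ + ‖Complex.exp (2 * ζ * ((s : ℂ) - (t : ℂ)))‖ := by
        exact
          norm_sub_le (1 : ℂ) (Complex.exp (2 * ζ * ((s : ℂ) - (t : ℂ))))
    _ ≤ 1 + 1 := by rw [norm_one]; linarith [hE]
    _ = 2 := by norm_num

lemma ker_id (ζ : ℂ) (s t : ℝ) (w v : ℂ) :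
    Complex.exp (-(ζ * t)) * ((1 / (2 * ζ)) *
        ((Complex.exp (ζ * ((t : ℂ) - (s : ℂ))) - Complex.exp (-(ζ * ((t : ℂ) - (s : ℂ))))) * w * v))
      = ((1 - Complex.exp (2 * ζ * ((s : ℂ) - (t : ℂ)))) / (2 * ζ)) * w *
          (Complex.exp (-(ζ * s)) * v) := by
  have e1 : Complex.exp (-(ζ * t)) * Complex.exp (ζ * ((t : ℂ) - (s : ℂ)))
      = Complex.exp (-(ζ * s)) := by
    rw [← Complex.exp_add]; congr 1; ring
  have e2 : Complex.exp (-(ζ * t)) * Complex.exp (-(ζ * ((t : ℂ) - (s : ℂ))))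
      = Complex.exp (2 * ζ * ((s : ℂ) - (t : ℂ))) * Complex.exp (-(ζ * s)) := by
    rw [← Complex.exp_add, ← Complex.exp_add]; congr 1; ring
  have key : Complex.exp (-(ζ * t)) *
      (Complex.exp (ζ * ((t : ℂ) - (s : ℂ))) - Complex.exp (-(ζ * ((t : ℂ) - (s : ℂ)))))
      = (1 - Complex.exp (2 * ζ * ((s : ℂ) - (t : ℂ)))) * Complex.exp (-(ζ * s)) := by
    rw [mul_sub, e1, e2]; ring
  calc Complex.exp (-(ζ * t)) * ((1 / (2 * ζ)) *
        ((Complex.exp (ζ * ((t : ℂ) - (s : ℂ))) - Complex.exp (-(ζ * ((t : ℂ) - (s : ℂ))))) * w * v))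
      = (Complex.exp (-(ζ * t)) *
          (Complex.exp (ζ * ((t : ℂ) - (s : ℂ))) - Complex.exp (-(ζ * ((t : ℂ) - (s : ℂ)))))) *
          (1 / (2 * ζ)) * w * v := by ring
    _ = ((1 - Complex.exp (2 * ζ * ((s : ℂ) - (t : ℂ)))) * Complex.exp (-(ζ * s))) *
          (1 / (2 * ζ)) * w * v := by rw [key]
    _ = _ := by ring

/-- If `ζ ∈ {1, i, -i}`, `a > 0`, `g` integrable on `(a,∞)`, and `u ∈ C²([a,∞))`
satisfies the integral equation
`u(x) = e^{ζx} + (1/(2ζ)) ∫ₐ^x (e^{ζ(x-s)} - e^{-ζ(x-s)}) g(s) u(s) ds`,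
then `z(x) := e^{-ζx} u(x)` satisfies `|z(x)| ≤ exp(∫ₐ^x |g(r)| dr)` on `[a,∞)`. -/
theorem abs_z_le_exp_integral
    (ζ : ℂ) (hζ : ζ = 1 ∨ ζ = Complex.I ∨ ζ = -Complex.I)
    (a : ℝ) (ha : 0 < a)
    (g : ℝ → ℝ) (hg : IntegrableOn g (Ioi a))
    (u : ℝ → ℂ) (hu : ContDiffOn ℝ 2 u (Ici a))
    (huint : ∀ x ∈ Ici a,
      u x = Complex.exp (ζ * x) +
        (1 / (2 * ζ)) *
          ∫ s in a..x,
            (Complex.exp (ζ * (x - s)) - Complex.exp (-(ζ * (x - s)))) * (g s : ℂ) * u s) :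
    ∀ x ∈ Ici a,
      ‖Complex.exp (-(ζ * x)) * u x‖ ≤ Real.exp (∫ r in a..x, |g r|) := by
  intro x hx
  set z : ℝ → ℂ := fun r => Complex.exp (-(ζ * r)) * u r with hzdef
  set φ : ℝ → ℝ := fun r => ‖z r‖ with hφdef
  show φ x ≤ _
  have hzc : ContinuousOn z (Ici a) := by
    apply ContinuousOn.mul _ hu.continuousOn
    exact (Complex.continuous_exp.comp
      ((continuous_const.mul Complex.continuous_ofReal).neg)).continuousOn
  have hφc : ContinuousOn φ (Icc a x) :=
    continuous_norm.comp_continuousOn (hzc.mono Icc_subset_Ici_self)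
  have hφnn : ∀ s, 0 ≤ φ s := fun s => norm_nonneg _
  have hgabs : IntegrableOn (fun r => |g r|) (Ioc a x) := (hg.mono_set Ioc_subset_Ioi_self).abs
  obtain ⟨c, -, hmax⟩ := isCompact_Icc.exists_isMaxOn (nonempty_Icc.2 hx) hφc
  set M := φ c with hMdef
  have hM : ∀ s ∈ Icc a x, φ s ≤ M := fun s hs => hmax hs
  have hM0 : 0 ≤ M := hφnn c
  apply gronwall_integral a x hx _ φ hgabs (fun s => abs_nonneg _) hφc hφnn
  intro t ht
  set κ : ℝ → ℂ := fun s => ((1 - Complex.exp (2 * ζ * ((s : ℂ) - (t : ℂ)))) / (2 * ζ)) *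
      (g s : ℂ) * (Complex.exp (-(ζ * s)) * u s) with hκdef
  have e0 : z t = 1 + ∫ s in a..t, κ s := by
    rw [hzdef]
    simp only []
    rw [huint t ht.1, mul_add, ← Complex.exp_add,
      show -(ζ * (t : ℂ)) + ζ * (t : ℂ) = 0 from by ring, Complex.exp_zero,
      ← mul_assoc, ← intervalIntegral.integral_const_mul]
    congr 1
    apply intervalIntegral.integral_congr
    intro s _
    exact (mul_assoc _ _ _).trans (ker_id ζ s t (g s : ℂ) (u s))
  have hsub : Ioc a t ⊆ Ioc a x := Ioc_subset_Ioc_right ht.2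
  have hgm : AEStronglyMeasurable g (volume.restrict (Ioc a t)) :=
    (hg.mono_set (hsub.trans Ioc_subset_Ioi_self)).1
  have hzm : AEStronglyMeasurable z (volume.restrict (Ioc a t)) :=
    (hzc.mono (fun s (hs : s ∈ Ioc a t) => le_of_lt hs.1)).aestronglyMeasurable
      measurableSet_Ioc
  have hbound : ∀ s ∈ Icc a t, ‖κ s‖ ≤ |g s| * φ s := by
    intro s hs
    have h1 := ker_abs ζ hζ s t hs.2
    calc ‖κ s‖ = ‖(1 - Complex.exp (2 * ζ * ((s : ℂ) - (t : ℂ)))) / (2 * ζ)‖ *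
          (|g s| * φ s) := by
          rw [hκdef]
          simp only [norm_mul, Complex.norm_real, Real.norm_eq_abs, hφdef, hzdef]
          ring
      _ ≤ 1 * (|g s| * φ s) :=
          mul_le_mul_of_nonneg_right h1 (mul_nonneg (abs_nonneg _) (hφnn s))
      _ = |g s| * φ s := one_mul _
  have int2 : IntervalIntegrable (fun s => |g s| * φ s) volume a t := by
    rw [intervalIntegrable_iff_integrableOn_Ioc_of_le ht.1]
    refine Integrable.mono' ((hgabs.mono_set hsub).const_mul M)
      ((continuous_abs.comp_aestronglyMeasurable hgm).mul hzm.norm) ?_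
    filter_upwards [ae_restrict_mem measurableSet_Ioc] with s hs
    rw [Real.norm_eq_abs, abs_of_nonneg (mul_nonneg (abs_nonneg _) (hφnn s))]
    calc |g s| * φ s ≤ |g s| * M :=
          mul_le_mul_of_nonneg_left (hM s ⟨hs.1.le, hs.2.trans ht.2⟩) (abs_nonneg _)
      _ = M * |g s| := mul_comm _ _
  have hκm : AEStronglyMeasurable κ (volume.restrict (Ioc a t)) := by
    apply AEStronglyMeasurable.mul
    apply AEStronglyMeasurable.mul
    · exact Continuous.aestronglyMeasurable
        ((continuous_const.sub (Complex.continuous_exp.comp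
          (continuous_const.mul (Complex.continuous_ofReal.sub continuous_const)))).div_const _)
    · exact Complex.continuous_ofReal.comp_aestronglyMeasurable hgm
    · exact hzm
  have int1 : IntervalIntegrable (fun s => ‖κ s‖) volume a t := by
    rw [intervalIntegrable_iff_integrableOn_Ioc_of_le ht.1]
    refine Integrable.mono' ((hgabs.mono_set hsub).const_mul M) hκm.norm ?_
    filter_upwards [ae_restrict_mem measurableSet_Ioc] with s hs
    rw [norm_norm]
    calc ‖κ s‖ ≤ |g s| * φ s := hbound s ⟨hs.1.le, hs.2⟩
      _ ≤ |g s| * M :=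
          mul_le_mul_of_nonneg_left (hM s ⟨hs.1.le, hs.2.trans ht.2⟩) (abs_nonneg _)
      _ = M * |g s| := mul_comm _ _
  calc φ t = ‖1 + ∫ s in a..t, κ s‖ := by rw [hφdef]; simp only []; rw [e0]
    _ ≤ ‖(1 : ℂ)‖ + ‖∫ s in a..t, κ s‖ := by
        exact norm_add_le (1 : ℂ) (∫ s in a..t, κ s)
    _ = 1 + ‖∫ s in a..t, κ s‖ := by simp
    _ ≤ 1 + ∫ s in a..t, ‖κ s‖ := by
        refine add_le_add_right ?_ 1
        simpa using intervalIntegral.norm_integral_le_integral_norm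
          (f := κ) (μ := volume) (a := a) (b := t) ht.1
    _ ≤ 1 + ∫ s in a..t, |g s| * φ s :=
        add_le_add_right (intervalIntegral.integral_mono_on ht.1 int1 int2 hbound) 1
end

section
/- Let ζ ∈ {1, i, -i}, a > 0, and g integrable on (a,∞). If u ∈ C²([a,∞)) satisfies the integral equation u(x) = e^{ζx} + (1/(2ζ))·∫ₐ^x (e^{ζ(x-s)} - e^{-ζ(x-s)})·g(s)·u(s) ds for all x ∈ [a,∞), then the function z(x) := e^{-ζx}·u(x) satisfies ∫ₐ^∞ |z(s)·g(s)| ds ≤ exp(∫ₐ^∞ |g(r)| dr) − 1; in particular z·g is integrable on (a,∞). -/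
open Set Filter MeasureTheory intervalIntegral
open scoped Topology

set_option maxHeartbeats 1000000 in
lemma exp_lipschitz {x y c : ℝ} (hx : x ≤ c) (hy : y ≤ c) :
    |Real.exp x - Real.exp y| ≤ Real.exp c * |x - y| := by
  wlog h : y ≤ x generalizing x y
  · rw [abs_sub_comm, abs_sub_comm x y]; exact this hy hx (le_of_not_ge h)
  rw [abs_of_nonneg (sub_nonneg.2 (Real.exp_le_exp.2 h)), abs_of_nonneg (sub_nonneg.2 h)]
  have h1 : Real.exp x - Real.exp y = Real.exp y * (Real.exp (x - y) - 1) := by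
    rw [mul_sub, ← Real.exp_add]; ring_nf
  have key : Real.exp (x - y) * Real.exp (-(x - y)) = 1 := by
    rw [← Real.exp_add]; simp
  have h2 : Real.exp (x - y) - 1 ≤ (x - y) * Real.exp (x - y) := by
    have h3 := mul_le_mul_of_nonneg_left (Real.add_one_le_exp (-(x - y)))
      (Real.exp_pos (x - y)).le
    nlinarith
  calc Real.exp x - Real.exp y ≤ Real.exp y * ((x - y) * Real.exp (x - y)) := by
        rw [h1]; exact mul_le_mul_of_nonneg_left h2 (Real.exp_pos y).le
    _ = (x - y) * (Real.exp y * Real.exp (x - y)) := by ring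
    _ = (x - y) * Real.exp x := by rw [← Real.exp_add]; ring_nf
    _ ≤ Real.exp c * (x - y) := by
        nlinarith [Real.exp_le_exp.2 hx, Real.exp_pos x, sub_nonneg.2 h]

lemma cont_exp_integral {h : ℝ → ℝ} (hc : Continuous h) (a b : ℝ) :
    ∫ s in a..b, h s * Real.exp (∫ t in a..s, h t)
      = Real.exp (∫ t in a..b, h t) - 1 := by
  set H : ℝ → ℝ := fun s => ∫ t in a..s, h t with hH
  have hHd : ∀ s : ℝ, HasDerivAt H (h s) s := fun s =>
    integral_hasDerivAt_right (hc.intervalIntegrable a s)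
      hc.stronglyMeasurable.stronglyMeasurableAtFilter hc.continuousAt
  have hHc : Continuous H := continuous_iff_continuousAt.2 fun s => (hHd s).continuousAt
  have hEd : ∀ s : ℝ, HasDerivAt (fun t => Real.exp (H t)) (h s * Real.exp (H s)) s := by
    intro s
    have := (hHd s).exp
    simpa [mul_comm] using this
  have hint : IntervalIntegrable (fun s => h s * Real.exp (H s)) volume a b :=
    (hc.mul (hHc.rexp)).intervalIntegrable a b
  have := integral_eq_sub_of_hasDerivAt (fun s _ => hEd s) hint
  rw [this, hH]
  simp


lemma star_lemma {f : ℝ → ℝ} (hf : Integrable f) (hf0 : ∀ s, 0 ≤ f s)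
    {a b : ℝ} (hab : a ≤ b) :
    ∫ s in a..b, f s * Real.exp (∫ t in a..s, f t)
      ≤ Real.exp (∫ t in a..b, f t) - 1 := by
  set F : ℝ → ℝ := fun s => ∫ t in a..s, f t with hF
  have hFc : Continuous F :=
    intervalIntegral.continuous_primitive (fun c d => hf.intervalIntegrable) a
  set M : ℝ := F b with hM
  -- basic facts about F
  have hFmono : ∀ s, a ≤ s → s ≤ b → F s ≤ M := by
    intro s has hsb
    have : F s + ∫ t in s..b, f t = F b :=
      integral_add_adjacent_intervals hf.intervalIntegrable hf.intervalIntegrable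
    have h2 : 0 ≤ ∫ t in s..b, f t :=
      integral_nonneg hsb (fun t _ => hf0 t)
    linarith
  have hF0 : ∀ s, a ≤ s → 0 ≤ F s := fun s has =>
    integral_nonneg has (fun t _ => hf0 t)
  have hM0 : 0 ≤ M := hF0 b hab
  set C : ℝ := Real.exp M + (M + 2) * Real.exp (M + 1) with hC
  have hC0 : 0 < C := by positivity
  -- main estimate with ε
  have main : ∀ ε : ℝ, 0 < ε → ε ≤ 1 →
      ∫ s in a..b, f s * Real.exp (F s) ≤ Real.exp M - 1 + ε * C := by
    intro ε hε hε1
    obtain ⟨h0, _, hh0close, hh0cont, hh0int⟩ :=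
      hf.exists_hasCompactSupport_integral_sub_le hε
    set h : ℝ → ℝ := fun t => max (h0 t) 0 with hh
    have hhc : Continuous h := hh0cont.max continuous_const
    have hhnn : ∀ t, 0 ≤ h t := fun t => le_max_right _ _
    have hhint : Integrable h := hh0int.pos_part
    have hclose : ∫ t, |f t - h t| ≤ ε := by
      refine le_trans (integral_mono ?_ ?_ ?_) hh0close
      · exact (hf.sub hhint).abs
      · exact (hf.sub hh0int).norm
      · intro t
        simp only [Real.norm_eq_abs]
        rcases le_or_gt 0 (h0 t) with h' | h'
        · simp [hh, max_eq_left h']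
        · rw [hh]
          simp only [max_eq_right h'.le]
          rw [abs_of_nonneg (by simpa using hf0 t)]
          rw [abs_of_nonneg (by nlinarith [hf0 t])]
          linarith [hf0 t]
    set H : ℝ → ℝ := fun s => ∫ t in a..s, h t with hH
    have hHc : Continuous H :=
      intervalIntegral.continuous_primitive (fun c d => hhc.intervalIntegrable c d) a
    -- |F s - H s| ≤ ε on [a, b]
    have hFH : ∀ s, a ≤ s → |F s - H s| ≤ ε := by
      intro s has
      have h1 : F s - H s = ∫ t in a..s, (f t - h t) := by
        rw [integral_sub hf.intervalIntegrable hhint.intervalIntegrable]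
      rw [h1]
      calc |∫ t in a..s, (f t - h t)| = ‖∫ t in a..s, (f t - h t)‖ := rfl
        _ ≤ ∫ t in a..s, ‖f t - h t‖ := norm_integral_le_integral_norm has
        _ = ∫ t in Ioc a s, |f t - h t| := by
            rw [intervalIntegral.integral_of_le has]; rfl
        _ ≤ ∫ t, |f t - h t| := by
            refine setIntegral_le_integral (hf.sub hhint).abs ?_
            exact Eventually.of_forall (fun t => abs_nonneg _)
        _ ≤ ε := hclose
    have hHM : ∀ s, a ≤ s → s ≤ b → H s ≤ M + ε := by
      intro s has hsb
      have := hFH s has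
      have := abs_le.1 this
      linarith [hFmono s has hsb]
    -- split the integral
    have hsplit : ∀ s : ℝ, f s * Real.exp (F s)
        = (f s - h s) * Real.exp (F s) + h s * (Real.exp (F s) - Real.exp (H s))
          + h s * Real.exp (H s) := by intro s; ring
    have int1 : IntervalIntegrable (fun s => (f s - h s) * Real.exp (F s)) volume a b :=
      ((hf.sub hhint).intervalIntegrable).mul_continuousOn (hFc.rexp).continuousOn
    have int2 : IntervalIntegrable
        (fun s => h s * (Real.exp (F s) - Real.exp (H s))) volume a b :=
      (hhc.mul ((hFc.rexp).sub (hHc.rexp))).intervalIntegrable a b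
    have int3 : IntervalIntegrable (fun s => h s * Real.exp (H s)) volume a b :=
      (hhc.mul (hHc.rexp)).intervalIntegrable a b
    have hsum : ∫ s in a..b, f s * Real.exp (F s)
        = (∫ s in a..b, (f s - h s) * Real.exp (F s))
          + (∫ s in a..b, h s * (Real.exp (F s) - Real.exp (H s)))
          + (∫ s in a..b, h s * Real.exp (H s)) := by
      have e1 : (∫ s in a..b, f s * Real.exp (F s))
          = ∫ s in a..b, ((f s - h s) * Real.exp (F s)
            + h s * (Real.exp (F s) - Real.exp (H s)) + h s * Real.exp (H s)) :=
        integral_congr (fun s _ => hsplit s)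
      rw [e1, integral_add (int1.add int2) int3, integral_add int1 int2]
    -- term 1
    have t1 : (∫ s in a..b, (f s - h s) * Real.exp (F s)) ≤ ε * Real.exp M := by
      have hb : ∀ s ∈ Ioc a b, ‖(f s - h s) * Real.exp (F s)‖ ≤ |f s - h s| * Real.exp M := by
        intro s hs
        rw [norm_mul, Real.norm_eq_abs, Real.norm_eq_abs,
          abs_of_nonneg (Real.exp_pos _).le]
        exact mul_le_mul_of_nonneg_left
          (Real.exp_le_exp.2 (hFmono s hs.1.le hs.2)) (abs_nonneg _)
      calc (∫ s in a..b, (f s - h s) * Real.exp (F s))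
          ≤ ‖∫ s in a..b, (f s - h s) * Real.exp (F s)‖ := le_abs_self _
        _ ≤ |∫ s in a..b, |f s - h s| * Real.exp M| := by
            refine intervalIntegral.norm_integral_le_abs_of_norm_le ?_ ?_
            · rw [uIoc_of_le hab]
              exact (ae_restrict_iff' measurableSet_Ioc).2
                (Eventually.of_forall hb)
            · exact ((hf.sub hhint).abs.intervalIntegrable).mul_continuousOn
                continuousOn_const
        _ = (∫ s in a..b, |f s - h s|) * Real.exp M := by
            rw [abs_of_nonneg, intervalIntegral.integral_mul_const]
            refine intervalIntegral.integral_nonneg hab (fun s _ => ?_)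
            positivity
        _ ≤ ε * Real.exp M := by
            refine mul_le_mul_of_nonneg_right ?_ (Real.exp_pos _).le
            calc (∫ s in a..b, |f s - h s|) = ∫ t in Ioc a b, |f t - h t| := by
                  rw [intervalIntegral.integral_of_le hab]
              _ ≤ ∫ t, |f t - h t| := setIntegral_le_integral (hf.sub hhint).abs
                  (Eventually.of_forall (fun t => abs_nonneg _))
              _ ≤ ε := hclose
    -- term 2
    have t2 : (∫ s in a..b, h s * (Real.exp (F s) - Real.exp (H s)))
        ≤ (M + 1) * (Real.exp (M + 1) * ε) := by
      have hb : ∀ s ∈ Ioc a b, ‖h s * (Real.exp (F s) - Real.exp (H s))‖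
          ≤ h s * (Real.exp (M + 1) * ε) := by
        intro s hs
        rw [norm_mul, Real.norm_eq_abs, Real.norm_eq_abs, abs_of_nonneg (hhnn s)]
        refine mul_le_mul_of_nonneg_left ?_ (hhnn s)
        have hFs : F s ≤ M + 1 := le_trans (hFmono s hs.1.le hs.2) (by linarith)
        have hHs : H s ≤ M + 1 := le_trans (hHM s hs.1.le hs.2) (by linarith)
        calc |Real.exp (F s) - Real.exp (H s)| ≤ Real.exp (M + 1) * |F s - H s| :=
              exp_lipschitz hFs hHs
          _ ≤ Real.exp (M + 1) * ε :=
              mul_le_mul_of_nonneg_left (hFH s hs.1.le) (Real.exp_pos _).le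
      calc (∫ s in a..b, h s * (Real.exp (F s) - Real.exp (H s)))
          ≤ ‖∫ s in a..b, h s * (Real.exp (F s) - Real.exp (H s))‖ := le_abs_self _
        _ ≤ |∫ s in a..b, h s * (Real.exp (M + 1) * ε)| := by
            refine intervalIntegral.norm_integral_le_abs_of_norm_le ?_ ?_
            · rw [uIoc_of_le hab]
              exact (ae_restrict_iff' measurableSet_Ioc).2 (Eventually.of_forall hb)
            · exact (hhc.mul continuous_const).intervalIntegrable a b
        _ = (∫ s in a..b, h s) * (Real.exp (M + 1) * ε) := by
            rw [abs_of_nonneg, intervalIntegral.integral_mul_const]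
            refine intervalIntegral.integral_nonneg hab (fun s _ => ?_)
            have := hhnn s; positivity
        _ ≤ (M + 1) * (Real.exp (M + 1) * ε) := by
            refine mul_le_mul_of_nonneg_right ?_ (by positivity)
            -- ∫ h ≤ ∫ f + ε ≤ M + 1
            have h1 : (∫ s in a..b, h s) - M = ∫ s in a..b, (h s - f s) := by
              rw [integral_sub hhint.intervalIntegrable hf.intervalIntegrable, hM]
            have h2 : (∫ s in a..b, (h s - f s)) ≤ ε := by
              calc (∫ s in a..b, (h s - f s)) ≤ ‖∫ s in a..b, (h s - f s)‖ := le_abs_self _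
                _ ≤ ∫ s in a..b, ‖h s - f s‖ := norm_integral_le_integral_norm hab
                _ = ∫ t in Ioc a b, |h t - f t| := by
                    rw [intervalIntegral.integral_of_le hab]; rfl
                _ = ∫ t in Ioc a b, |f t - h t| := by
                    congr 1; ext t; rw [abs_sub_comm]
                _ ≤ ∫ t, |f t - h t| := setIntegral_le_integral (hf.sub hhint).abs
                    (Eventually.of_forall (fun t => abs_nonneg _))
                _ ≤ ε := hclose
            linarith
    -- term 3
    have t3 : (∫ s in a..b, h s * Real.exp (H s)) ≤ Real.exp M - 1 + ε * Real.exp (M + 1) := by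
      rw [cont_exp_integral hhc a b]
      have h1 : H b ≤ M + ε := hHM b hab le_rfl
      have h2 : Real.exp (H b) ≤ Real.exp M * Real.exp ε := by
        rw [← Real.exp_add]; exact Real.exp_le_exp.2 (by linarith)
      have h3 : Real.exp ε ≤ 1 + ε * Real.exp 1 := by
        have h4 := Real.add_one_le_exp (-ε)
        have h5 : Real.exp ε * Real.exp (-ε) = 1 := by rw [← Real.exp_add]; simp
        have h6 : Real.exp ε ≤ Real.exp 1 := Real.exp_le_exp.2 hε1
        nlinarith [Real.exp_pos ε]
      have h7 : Real.exp M * Real.exp ε ≤ Real.exp M + ε * Real.exp (M + 1) := by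
        have := mul_le_mul_of_nonneg_left h3 (Real.exp_pos M).le
        rw [Real.exp_add]; nlinarith [Real.exp_pos M]
      linarith
    rw [hsum]
    have : ε * Real.exp M + (M + 1) * (Real.exp (M + 1) * ε) + ε * Real.exp (M + 1)
        = ε * C := by rw [hC]; ring
    linarith
  -- conclude by letting ε → 0
  refine le_of_forall_pos_le_add (fun δ hδ => ?_)
  have hε : 0 < min 1 (δ / C) := lt_min one_pos (by positivity)
  have := main (min 1 (δ / C)) hε (min_le_left _ _)
  have h2 : min 1 (δ / C) * C ≤ δ := by
    calc min 1 (δ / C) * C ≤ (δ / C) * C :=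
        mul_le_mul_of_nonneg_right (min_le_right _ _) hC0.le
      _ = δ := by field_simp
  linarith


lemma gronwall_int {f φ : ℝ → ℝ} (hf : Integrable f) (hf0 : ∀ s, 0 ≤ f s)
    {a b : ℝ} (hab : a ≤ b) (hφ : ContinuousOn φ (Icc a b))
    (hineq : ∀ x ∈ Icc a b, φ x ≤ 1 + ∫ s in a..x, f s * φ s) :
    ∀ x ∈ Icc a b, φ x ≤ Real.exp (∫ t in a..x, f t) := by
  set F : ℝ → ℝ := fun s => ∫ t in a..s, f t with hF
  have hFc : Continuous F :=
    intervalIntegral.continuous_primitive (fun c d => hf.intervalIntegrable) a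
  suffices key : ∀ ε : ℝ, 0 < ε → ∀ x ∈ Icc a b, φ x ≤ (1 + ε) * Real.exp (F x) by
    intro x hx
    refine le_of_forall_pos_le_add (fun δ hδ => ?_)
    have hε : 0 < δ / Real.exp (F x) := by positivity
    have := key _ hε x hx
    have h2 : (1 + δ / Real.exp (F x)) * Real.exp (F x) = Real.exp (F x) + δ := by
      field_simp
    linarith [this, h2.le]
  intro ε hε
  by_contra hcon
  push_neg at hcon
  obtain ⟨x₀, hx₀, hx₀'⟩ := hcon
  set S : Set ℝ := {x ∈ Icc a b | (1 + ε) * Real.exp (F x) ≤ φ x} with hS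
  have hSne : S.Nonempty := ⟨x₀, hx₀, hx₀'.le⟩
  have hSclosed : IsClosed S := by
    have hc2 : ContinuousOn (fun x => φ x - (1 + ε) * Real.exp (F x)) (Icc a b) :=
      hφ.sub (continuousOn_const.mul (hFc.rexp.continuousOn))
    have : S = Icc a b ∩ (fun x => φ x - (1 + ε) * Real.exp (F x)) ⁻¹' (Ici 0) := by
      ext x
      simp only [hS, mem_setOf_eq, mem_inter_iff, mem_preimage, mem_Ici, sub_nonneg]
    rw [this]
    exact hc2.preimage_isClosed_of_isClosed isClosed_Icc isClosed_Ici
  have hSbdd : BddBelow S := ⟨a, fun x hx => hx.1.1⟩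
  set c : ℝ := sInf S with hc
  have hcS : c ∈ S := hSclosed.csInf_mem hSne hSbdd
  have hcIcc : c ∈ Icc a b := hcS.1
  have hanotS : a ∉ S := by
    intro haS
    have h1 : φ a ≤ 1 := by
      have := hineq a (left_mem_Icc.2 hab)
      simpa using this
    have h2 : (1 + ε) * Real.exp (F a) = 1 + ε := by
      simp [hF]
    have := haS.2
    rw [h2] at this
    linarith
  have hac : a < c := lt_of_le_of_ne hcIcc.1 (fun h => hanotS (h ▸ hcS))
  have hlt : ∀ s, a ≤ s → s < c → φ s ≤ (1 + ε) * Real.exp (F s) := by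
    intro s has hsc
    by_contra h
    push_neg at h
    have hsS : s ∈ S := ⟨⟨has, hsc.le.trans hcIcc.2⟩, h.le⟩
    exact absurd (csInf_le hSbdd hsS) (not_le.2 hsc)
  -- integrability
  have intφ : IntervalIntegrable (fun s => f s * φ s) volume a c :=
    (hf.intervalIntegrable).mul_continuousOn
      (hφ.mono (by rw [uIcc_of_le hcIcc.1]; exact Icc_subset_Icc le_rfl hcIcc.2))
  have intE : IntervalIntegrable (fun s => f s * ((1 + ε) * Real.exp (F s))) volume a c :=
    (hf.intervalIntegrable).mul_continuousOn
      (Continuous.continuousOn (by continuity))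
  have step1 : φ c ≤ 1 + ∫ s in a..c, f s * φ s := hineq c hcIcc
  have step2 : (∫ s in a..c, f s * φ s)
      ≤ ∫ s in a..c, f s * ((1 + ε) * Real.exp (F s)) := by
    refine integral_mono_ae_restrict hcIcc.1 intφ intE ?_
    have hne : ∀ᵐ x ∂(volume.restrict (Icc a c)), x ≠ c := by
      refine ae_restrict_of_ae ?_
      rw [MeasureTheory.ae_iff]
      have : {x : ℝ | ¬ x ≠ c} = {c} := by ext y; simp
      rw [this]; exact Real.volume_singleton
    have hmem : ∀ᵐ x ∂(volume.restrict (Icc a c)), x ∈ Icc a c :=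
      ae_restrict_mem measurableSet_Icc
    filter_upwards [hne, hmem] with x hxne hxmem
    have hxc : x < c := lt_of_le_of_ne hxmem.2 hxne
    exact mul_le_mul_of_nonneg_left (hlt x hxmem.1 hxc) (hf0 x)
  have step3 : (∫ s in a..c, f s * ((1 + ε) * Real.exp (F s)))
      ≤ (1 + ε) * (Real.exp (F c) - 1) := by
    have e1 : (∫ s in a..c, f s * ((1 + ε) * Real.exp (F s)))
        = (1 + ε) * ∫ s in a..c, f s * Real.exp (F s) := by
      rw [← intervalIntegral.integral_const_mul]
      exact integral_congr (fun s _ => by ring)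
    rw [e1]
    exact mul_le_mul_of_nonneg_left (star_lemma hf hf0 hcIcc.1) (by linarith)
  have hfinal : φ c ≤ (1 + ε) * Real.exp (F c) - ε := by
    have := step1.trans ((by linarith : (1:ℝ) + ∫ s in a..c, f s * φ s
      ≤ 1 + (1 + ε) * (Real.exp (F c) - 1)))
    linarith
  have := hcS.2
  linarith


lemma kernel_bound (ζ : ℂ) (hRe : 0 ≤ ζ.re) (hAbs : ‖ζ‖ = 1)
    {x s : ℝ} (hsx : s ≤ x) :
    ‖Complex.exp (-(ζ * x)) * (1 / (2 * ζ)) *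
      (Complex.exp (ζ * (x - s)) - Complex.exp (-(ζ * (x - s))))‖
      ≤ ‖Complex.exp (-(ζ * s))‖ := by
  have hre1 : (-(ζ * (s:ℝ))).re = -(ζ.re * s) := by
    simp [Complex.mul_re]
  have e1 : Complex.exp (-(ζ * x)) * (Complex.exp (ζ * (x - s)) - Complex.exp (-(ζ * (x - s))))
      = Complex.exp (-(ζ * s)) - Complex.exp (ζ * ((s:ℂ) - 2 * x)) := by
    rw [mul_sub, ← Complex.exp_add, ← Complex.exp_add]
    congr 2 <;> push_cast <;> ring
  have habs2 : ‖1 / (2 * ζ)‖ = 1 / 2 := by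
    rw [norm_div, norm_mul, hAbs]
    simp
  calc ‖Complex.exp (-(ζ * x)) * (1 / (2 * ζ)) *
        (Complex.exp (ζ * (x - s)) - Complex.exp (-(ζ * (x - s))))‖
      = ‖1 / (2 * ζ)‖ * ‖Complex.exp (-(ζ * x)) * (Complex.exp (ζ * (x - s)) - Complex.exp (-(ζ * (x - s))))‖ := by
        rw [show Complex.exp (-(ζ * x)) * (1 / (2 * ζ)) *
            (Complex.exp (ζ * (x - s)) - Complex.exp (-(ζ * (x - s))))
          = (1 / (2 * ζ)) * (Complex.exp (-(ζ * x)) *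
            (Complex.exp (ζ * (x - s)) - Complex.exp (-(ζ * (x - s))))) from by ring, norm_mul]
    _ = (1 / 2) * ‖Complex.exp (-(ζ * s)) - Complex.exp (ζ * ((s:ℂ) - 2 * x))‖ := by
        rw [habs2, e1]
    _ ≤ (1 / 2) * (‖Complex.exp (-(ζ * s))‖
          + ‖Complex.exp (ζ * ((s:ℂ) - 2 * x))‖) := by
        refine mul_le_mul_of_nonneg_left ?_ (by norm_num)
        exact norm_sub_le _ _
    _ ≤ ‖Complex.exp (-(ζ * s))‖ := by
        rw [Complex.norm_exp, Complex.norm_exp, hre1]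
        have hre2 : (ζ * ((s:ℂ) - 2 * x)).re = ζ.re * (s - 2 * x) := by
          have : ((s:ℂ) - 2 * x) = ((s - 2 * x : ℝ) : ℂ) := by push_cast; ring
          rw [this]
          simp [Complex.mul_re]
        rw [hre2]
        have h3 : ζ.re * (s - 2 * x) ≤ -(ζ.re * s) := by nlinarith
        have := Real.exp_le_exp.2 h3
        linarith [Real.exp_pos (-(ζ.re * s))]


/-- If `ζ ∈ {1, i, -i}`, `a > 0`, `g` integrable on `(a,∞)`, and `u ∈ C²([a,∞))`
satisfies the integral equation
`u(x) = e^{ζx} + (1/(2ζ)) ∫ₐ^x (e^{ζ(x-s)} - e^{-ζ(x-s)}) g(s) u(s) ds`,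
then, with `z(x) := e^{-ζx} u(x)`, the function `z·g` is integrable on `(a,∞)` and
`∫ₐ^∞ |z(s) g(s)| ds ≤ exp(∫ₐ^∞ |g(r)| dr) - 1`. -/
theorem zg_integrable_and_bound
    (ζ : ℂ) (hζ : ζ = 1 ∨ ζ = Complex.I ∨ ζ = -Complex.I)
    (a : ℝ) (ha : 0 < a)
    (g : ℝ → ℝ) (hg : IntegrableOn g (Ioi a))
    (u : ℝ → ℂ) (hu : ContDiffOn ℝ 2 u (Ici a))
    (huint : ∀ x ∈ Ici a,
      u x = Complex.exp (ζ * x) +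
        (1 / (2 * ζ)) *
          ∫ s in a..x,
            (Complex.exp (ζ * (x - s)) - Complex.exp (-(ζ * (x - s)))) * (g s : ℂ) * u s) :
    IntegrableOn (fun s : ℝ => Complex.exp (-(ζ * s)) * u s * (g s : ℂ)) (Ioi a) ∧
    ∫ s in Ioi a, ‖Complex.exp (-(ζ * s)) * u s * (g s : ℂ)‖ ≤
      Real.exp (∫ r in Ioi a, |g r|) - 1 := by
  have hRe : 0 ≤ ζ.re := by rcases hζ with h | h | h <;> simp [h]
  have hAbs : ‖ζ‖ = 1 := by rcases hζ with h | h | h <;> simp [h]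
  set z : ℝ → ℂ := fun s => Complex.exp (-(ζ * s)) * u s with hz
  set φ : ℝ → ℝ := fun s => ‖z s‖ with hφ
  have hzc : ContinuousOn z (Ici a) := by
    refine ContinuousOn.mul ?_ hu.continuousOn
    exact (Complex.continuous_exp.comp
      ((continuous_const.mul Complex.continuous_ofReal).neg)).continuousOn
  have hφc : ContinuousOn φ (Ici a) := hzc.norm
  have hφ0 : ∀ s, 0 ≤ φ s := fun s => norm_nonneg _
  set f : ℝ → ℝ := (Ioi a).indicator (fun s => |g s|) with hf
  have hf_int : Integrable f := (integrable_indicator_iff measurableSet_Ioi).2 hg.abs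
  have hf0 : ∀ s, 0 ≤ f s := fun s =>
    Set.indicator_nonneg (fun t _ => abs_nonneg _) s
  have hf_eq : ∀ s ∈ Ioi a, f s = |g s| := fun s hs => Set.indicator_of_mem hs _
  -- Lemma B : the basic integral inequality
  have hB : ∀ x ∈ Ici a, φ x ≤ 1 + ∫ s in a..x, f s * φ s := by
    intro x hx
    have hx' : a ≤ x := hx
    have hbint : IntervalIntegrable (fun s => f s * φ s) volume a x :=
      hf_int.intervalIntegrable.mul_continuousOn
        (hφc.mono (by rw [uIcc_of_le hx']; exact fun t ht => ht.1))
    have hexp1 : Complex.exp (-(ζ * x)) * Complex.exp (ζ * x) = 1 := by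
      rw [← Complex.exp_add]; simp
    set c : ℂ := Complex.exp (-(ζ * x)) * (1 / (2 * ζ)) with hc
    have e2 : z x - 1 = ∫ s in a..x,
        c * ((Complex.exp (ζ * (x - s)) - Complex.exp (-(ζ * (x - s)))) * (g s : ℂ) * u s) := by
      rw [intervalIntegral.integral_const_mul]
      rw [hz]
      simp only
      rw [huint x hx, mul_add, hexp1, hc]
      ring
    have e3 : ‖z x - 1‖ ≤ ∫ s in a..x, f s * φ s := by
      rw [e2]
      have hbound : ∀ᵐ t : ℝ ∂(volume.restrict (Set.uIoc a x)),
          ‖c * ((Complex.exp (ζ * (x - t)) - Complex.exp (-(ζ * (x - t)))) * (g t : ℂ) * u t)‖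
            ≤ f t * φ t := by
        rw [uIoc_of_le hx']
        refine (ae_restrict_iff' measurableSet_Ioc).2 (Eventually.of_forall ?_)
        intro s hs
        have hsa : s ∈ Ioi a := hs.1
        rw [hf_eq s hsa, hφ]
        simp only [hz]
        have hk := kernel_bound ζ hRe hAbs hs.2
        calc ‖c * ((Complex.exp (ζ * (x - s)) - Complex.exp (-(ζ * (x - s)))) * (g s : ℂ) * u s)‖
            = ‖c * (Complex.exp (ζ * (x - s)) - Complex.exp (-(ζ * (x - s))))‖
              * |g s| * ‖u s‖ := by
              simp only [norm_mul, Complex.norm_real, Real.norm_eq_abs]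
              ring
          _ ≤ ‖Complex.exp (-(ζ * s))‖ * |g s| * ‖u s‖ := by
              refine mul_le_mul_of_nonneg_right
                (mul_le_mul_of_nonneg_right ?_ (abs_nonneg _)) (norm_nonneg _)
              simpa [hc, map_mul] using hk
          _ = |g s| * ‖Complex.exp (-(ζ * s)) * u s‖ := by
              rw [norm_mul]; ring
      have := intervalIntegral.norm_integral_le_abs_of_norm_le hbound hbint
      refine this.trans ?_
      rw [abs_of_nonneg]
      exact intervalIntegral.integral_nonneg hx' (fun s _ => mul_nonneg (hf0 s) (hφ0 s))
    calc φ x = ‖(1 : ℂ) + (z x - 1)‖ := by rw [hφ]; simp only; ring_nf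
      _ ≤ ‖(1 : ℂ)‖ + ‖z x - 1‖ := norm_add_le _ _
      _ ≤ 1 + ∫ s in a..x, f s * φ s := by rw [norm_one]; linarith [e3]
  -- Gronwall ⇒ pointwise bound
  have hφexp : ∀ x ∈ Ici a, φ x ≤ Real.exp (∫ t in a..x, f t) := by
    intro x hx
    exact gronwall_int hf_int hf0 (hx : a ≤ x)
      (hφc.mono (fun t ht => ht.1))
      (fun y hy => hB y hy.1) x ⟨hx, le_rfl⟩
  set IG : ℝ := ∫ r in Ioi a, |g r| with hIG
  have hIoif : (∫ t in Ioi a, f t) = IG := by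
    rw [hf, setIntegral_indicator measurableSet_Ioi, inter_self]
  have hFle : ∀ x, a ≤ x → (∫ t in a..x, f t) ≤ IG := by
    intro x hx
    rw [intervalIntegral.integral_of_le hx, ← hIoif]
    refine setIntegral_mono_set hf_int.integrableOn
      (Eventually.of_forall (fun t => hf0 t)) ?_
    exact HasSubset.Subset.eventuallyLE Ioc_subset_Ioi_self
  have hφM : ∀ x, a ≤ x → φ x ≤ Real.exp IG :=
    fun x hx => (hφexp x hx).trans (Real.exp_le_exp.2 (hFle x hx))
  -- Integrability
  set W : ℝ → ℂ := fun s => Complex.exp (-(ζ * s)) * u s * (g s : ℂ) with hW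
  have hWmeas : AEStronglyMeasurable W (volume.restrict (Ioi a)) := by
    refine AEStronglyMeasurable.mul ?_ ?_
    · exact (hzc.mono (fun t (ht : t ∈ Ioi a) => mem_Ici.2 (le_of_lt (mem_Ioi.1 ht)))).aestronglyMeasurable
        measurableSet_Ioi
    · exact Complex.continuous_ofReal.comp_aestronglyMeasurable hg.aestronglyMeasurable
  have hWbound : ∀ᵐ s ∂(volume.restrict (Ioi a)), ‖W s‖ ≤ Real.exp IG * |g s| := by
    refine (ae_restrict_iff' measurableSet_Ioi).2 (Eventually.of_forall (fun s hs => ?_))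
    have : ‖W s‖ = φ s * |g s| := by
      rw [hW, hφ, hz]; simp only [norm_mul, Complex.norm_real, Real.norm_eq_abs]
    rw [this]
    exact mul_le_mul_of_nonneg_right (hφM s (le_of_lt hs)) (abs_nonneg _)
  have hWint : IntegrableOn W (Ioi a) :=
    Integrable.mono' (hg.abs.const_mul (Real.exp IG)) hWmeas hWbound
  refine ⟨hWint, ?_⟩
  -- the final bound
  have hgoal : (∫ s in Ioi a, ‖W s‖) = ∫ s in Ioi a, ‖W s‖ := rfl
  rw [hgoal]
  have hqint : IntegrableOn (fun s => ‖W s‖) (Ioi a) := hWint.norm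
  have htends : Tendsto (fun b => ∫ s in a..b, ‖W s‖) atTop
      (𝓝 (∫ s in Ioi a, ‖W s‖)) :=
    intervalIntegral_tendsto_integral_Ioi a hqint tendsto_id
  refine le_of_tendsto htends ?_
  filter_upwards [eventually_ge_atTop a] with b hb
  have step1 : (∫ s in a..b, ‖W s‖)
      ≤ ∫ s in a..b, f s * Real.exp (∫ t in a..s, f t) := by
    have hFc : Continuous fun s => Real.exp (∫ t in a..s, f t) :=
      (intervalIntegral.continuous_primitive (fun c d => hf_int.intervalIntegrable) a).rexp
    refine integral_mono_ae_restrict hb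
      ((intervalIntegrable_iff_integrableOn_Ioc_of_le hb).2
        (hqint.mono_set Ioc_subset_Ioi_self))
      (hf_int.intervalIntegrable.mul_continuousOn hFc.continuousOn) ?_
    have hne : ∀ᵐ x ∂(volume.restrict (Icc a b)), x ≠ a := by
      refine ae_restrict_of_ae ?_
      rw [MeasureTheory.ae_iff]
      have : {x : ℝ | ¬ x ≠ a} = {a} := by ext y; simp
      rw [this]; exact Real.volume_singleton
    have hmem : ∀ᵐ x ∂(volume.restrict (Icc a b)), x ∈ Icc a b :=
      ae_restrict_mem measurableSet_Icc
    filter_upwards [hne, hmem] with s hsne hsmem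
    have hsa : s ∈ Ioi a := lt_of_le_of_ne hsmem.1 (Ne.symm hsne)
    have h1 : ‖W s‖ = φ s * |g s| := by
      rw [hW, hφ, hz]; simp only [norm_mul, Complex.norm_real, Real.norm_eq_abs]
    rw [h1, hf_eq s hsa, mul_comm]
    exact mul_le_mul_of_nonneg_left (hφexp s (mem_Ici.2 (le_of_lt (mem_Ioi.1 hsa)))) (abs_nonneg _)
  have step2 : (∫ s in a..b, f s * Real.exp (∫ t in a..s, f t))
      ≤ Real.exp (∫ t in a..b, f t) - 1 := star_lemma hf_int hf0 hb
  have step3 : Real.exp (∫ t in a..b, f t) - 1 ≤ Real.exp IG - 1 := by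
    have := Real.exp_le_exp.2 (hFle b hb)
    linarith
  linarith
end

section
/- Let a > 0 and let f ∈ C²([a,∞)) satisfy |f(x)| > 0 for all x ≥ a and |f|^{1/2} ∉ L¹(a,∞). Define Φ(x) := ∫ₐ^x |f(r)|^{1/2} dr for x ∈ [a,∞). Then Φ is a bijection from [a,∞) onto [0,∞), and if u ∈ C²([a,∞)) satisfies u''(x) = (f(x)+g(x))·u(x), then the function w(y) := |f(Φ⁻¹(y))|^{1/4}·u(Φ⁻¹(y)) satisfies w''(y) = ( f(Φ⁻¹(y))/|f(Φ⁻¹(y))| + ψ_{f,g}(Φ⁻¹(y))/|f(Φ⁻¹(y))|^{1/2} )·w(y) for all y ∈ [0,∞). -/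
open Set Filter MeasureTheory
open scoped Topology

lemma inv_hasDerivWithinAt {s t : Set ℝ} {Φ Ψ : ℝ → ℝ} {x y c : ℝ}
    (hΨy : Ψ y = x)
    (hΦ : HasDerivWithinAt Φ c s x) (hc : c ≠ 0)
    (hΨcont : ContinuousWithinAt Ψ t y) (hmaps : MapsTo Ψ t s)
    (hinj : ∀ y' ∈ t, y' ≠ y → Ψ y' ≠ x)
    (hright : ∀ y' ∈ t, Φ (Ψ y') = y') (hy : y ∈ t) :
    HasDerivWithinAt Ψ c⁻¹ t y := by
  rw [hasDerivWithinAt_iff_tendsto_slope]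
  have hΨtend : Tendsto Ψ (𝓝[t \ {y}] y) (𝓝[s \ {x}] x) := by
    apply tendsto_nhdsWithin_of_tendsto_nhds_of_eventually_within
    · exact hΨy ▸ (hΨcont.tendsto.mono_left (nhdsWithin_mono y diff_subset))
    · filter_upwards [self_mem_nhdsWithin] with y' hy'
      exact ⟨hmaps hy'.1, hinj y' hy'.1 hy'.2⟩
  have hslope : Tendsto (fun y' => (slope Φ x (Ψ y'))⁻¹) (𝓝[t \ {y}] y) (𝓝 c⁻¹) :=
    (((hasDerivWithinAt_iff_tendsto_slope).mp hΦ).comp hΨtend).inv₀ hc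
  refine hslope.congr' ?_
  filter_upwards [self_mem_nhdsWithin] with y' hy'
  have h1 : Φ (Ψ y') = y' := hright y' hy'.1
  have h2 : Φ x = y := hΨy ▸ hright y hy
  rw [slope_def_field, slope_def_field, inv_div, h1, h2, hΨy]

lemma rpow_eq_pow_inv (v : ℝ) (hv : 0 < v) (e : ℝ) (n : ℕ) (h : e = -((n : ℝ)/4)) :
    v ^ e = ((v ^ ((1:ℝ)/4)) ^ n)⁻¹ := by
  rw [h, ← Real.rpow_natCast (v ^ ((1:ℝ)/4)) n, ← Real.rpow_mul hv.le, ← Real.rpow_neg hv.le]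
  congr 1
  ring

lemma rpow_eq_pow (v : ℝ) (hv : 0 ≤ v) (e : ℝ) (n : ℕ) (h : e = ((n : ℝ)/4)) :
    v ^ e = (v ^ ((1:ℝ)/4)) ^ n := by
  rw [h, ← Real.rpow_natCast (v ^ ((1:ℝ)/4)) n, ← Real.rpow_mul hv]
  congr 1
  ring


/-- `ψ_{f,g} = |f|^{-1/4} (-d²/dx² + g) |f|^{-1/4}`, with derivatives taken
within the set `s` (here `s = [a,∞)`). -/
noncomputable def psiW (f g : ℝ → ℝ) (s : Set ℝ) (x : ℝ) : ℝ :=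
  |f x| ^ (-(1 / 4 : ℝ)) *
    (-(derivWithin (derivWithin (fun t => |f t| ^ (-(1 / 4 : ℝ))) s) s x) +
      g x * |f x| ^ (-(1 / 4 : ℝ)))

/-- Liouville transformation: if `f ∈ C²([a,∞))` is nonvanishing on `[a,∞)` and
`|f|^{1/2} ∉ L¹(a,∞)`, then `Φ(x) = ∫ₐ^x |f(r)|^{1/2} dr` is a bijection from
`[a,∞)` onto `[0,∞)`, and if `u''= (f+g)u` on `[a,∞)`, then
`w(y) = |f(Φ⁻¹(y))|^{1/4} u(Φ⁻¹(y))` satisfies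
`w'' = (f(Φ⁻¹)/|f(Φ⁻¹)| + ψ_{f,g}(Φ⁻¹)/|f(Φ⁻¹)|^{1/2}) w` on `[0,∞)`. -/
theorem liouville_transformation
    (a : ℝ) (ha : 0 < a) (f g : ℝ → ℝ)
    (hf : ContDiffOn ℝ 2 f (Ici a))
    (hf0 : ∀ x ∈ Ici a, f x ≠ 0)
    (hfint : ¬ IntegrableOn (fun r => |f r| ^ ((1 : ℝ) / 2)) (Ioi a))
    (Φ : ℝ → ℝ) (hΦ : ∀ x, Φ x = ∫ r in a..x, |f r| ^ ((1 : ℝ) / 2)) :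
    BijOn Φ (Ici a) (Ici 0) ∧
    ∀ u : ℝ → ℝ, ContDiffOn ℝ 2 u (Ici a) →
      (∀ x ∈ Ici a,
        derivWithin (derivWithin u (Ici a)) (Ici a) x = (f x + g x) * u x) →
      ∀ w : ℝ → ℝ,
        (∀ y, w y = |f (Function.invFunOn Φ (Ici a) y)| ^ ((1 : ℝ) / 4) *
            u (Function.invFunOn Φ (Ici a) y)) →
        ∀ y ∈ Ici (0 : ℝ),
          derivWithin (derivWithin w (Ici 0)) (Ici 0) y =
            (f (Function.invFunOn Φ (Ici a) y) / |f (Function.invFunOn Φ (Ici a) y)| +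
              psiW f g (Ici a) (Function.invFunOn Φ (Ici a) y) /
                |f (Function.invFunOn Φ (Ici a) y)| ^ ((1 : ℝ) / 2)) * w y := by
  have hfc : ContinuousOn f (Ici a) := hf.continuousOn
  set F : ℝ → ℝ := fun r => |f r| ^ ((1 : ℝ) / 2) with hFdef
  have hFc : ContinuousOn F (Ici a) :=
    (hfc.abs).rpow_const (fun x hx => Or.inl (abs_ne_zero.mpr (hf0 x hx)))
  have hFpos : ∀ x ∈ Ici a, 0 < F x := fun x hx =>
    Real.rpow_pos_of_pos (abs_pos.mpr (hf0 x hx)) _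
  have hFnonneg : ∀ r, 0 ≤ F r := fun r => Real.rpow_nonneg (abs_nonneg _) _
  have hFint : ∀ x ∈ Ici a, IntervalIntegrable F MeasureTheory.volume a x := by
    intro x hx
    apply ContinuousOn.intervalIntegrable
    apply hFc.mono
    rw [uIcc_of_le hx]
    exact Icc_subset_Ici_self
  have hderiv : ∀ x ∈ Ici a, HasDerivWithinAt Φ (F x) (Ici a) x := by
    intro x hx
    have hΦfun : Φ = fun u => ∫ r in a..u, F r := funext hΦ
    rw [hΦfun]
    have hmeas : AEStronglyMeasurable F (MeasureTheory.volume.restrict (Ici a)) :=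
      hFc.aestronglyMeasurable measurableSet_Ici
    rcases eq_or_lt_of_le (mem_Ici.mp hx) with h | h
    · subst h
      exact intervalIntegral.integral_hasDerivWithinAt_right (hFint a hx)
        ⟨Ici a, nhdsWithin_mono a Ioi_subset_Ici_self self_mem_nhdsWithin, hmeas⟩
        ((hFc.continuousWithinAt hx).mono Ioi_subset_Ici_self)
    · exact (intervalIntegral.integral_hasDerivAt_right (hFint x hx)
        ⟨Ici a, Ici_mem_nhds h, hmeas⟩ ((hFc x hx).continuousAt (Ici_mem_nhds h))).hasDerivWithinAt
  have hΦcont : ContinuousOn Φ (Ici a) := fun x hx => (hderiv x hx).continuousWithinAt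
  have hmono : StrictMonoOn Φ (Ici a) := by
    apply strictMonoOn_of_deriv_pos (convex_Ici a) hΦcont
    intro x hx
    rw [interior_Ici] at hx
    rw [((hderiv x (mem_Ici.mpr (le_of_lt hx))).hasDerivAt (Ici_mem_nhds hx)).deriv]
    exact hFpos x (mem_Ici.mpr (le_of_lt hx))
  have hΦa : Φ a = 0 := by rw [hΦ]; exact intervalIntegral.integral_same
  have hmaps : MapsTo Φ (Ici a) (Ici 0) := by
    intro x hx
    have := hmono.monotoneOn self_mem_Ici hx hx
    rw [hΦa] at this
    exact this
  have hunb : ∀ y : ℝ, ∃ x ∈ Ici a, y ≤ Φ x := by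
    by_contra h
    push_neg at h
    obtain ⟨y, hy⟩ := h
    apply hfint
    apply MeasureTheory.integrableOn_Ioi_of_intervalIntegral_norm_bounded y a
      (b := fun n : ℕ => a + n) (l := atTop)
    · intro n
      have : IntervalIntegrable F MeasureTheory.volume a (a + n) :=
        hFint (a + n) (by simp [le_add_iff_nonneg_right, Nat.cast_nonneg])
      rw [intervalIntegrable_iff_integrableOn_Ioc_of_le
        (le_add_of_nonneg_right (Nat.cast_nonneg n))] at this
      exact this
    · exact tendsto_atTop_add_const_left _ a tendsto_natCast_atTop_atTop
    · filter_upwards with n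
      have heq : (∫ x in a..(a + (n:ℝ)), ‖F x‖) = ∫ x in a..(a + (n:ℝ)), F x := by
        apply intervalIntegral.integral_congr
        intro x _
        exact Real.norm_of_nonneg (hFnonneg x)
      rw [heq, ← hΦ (a + n)]
      exact (hy (a + n) (by simp [le_add_iff_nonneg_right, Nat.cast_nonneg])).le
  have hsurj : SurjOn Φ (Ici a) (Ici 0) := by
    intro y hy
    obtain ⟨b, hb, hyb⟩ := hunb y
    have hIcc : Icc (Φ a) (Φ b) ⊆ Φ '' Icc a b :=
      intermediate_value_Icc hb (hΦcont.mono (Icc_subset_Ici_self))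
    obtain ⟨x, hx, hxy⟩ := hIcc (by rw [hΦa]; exact ⟨hy, hyb⟩)
    exact ⟨x, hx.1, hxy⟩
  have hbij : BijOn Φ (Ici a) (Ici 0) := ⟨hmaps, hmono.injOn, hsurj⟩
  refine ⟨hbij, ?_⟩
  -- inverse function
  set Ψ : ℝ → ℝ := Function.invFunOn Φ (Ici a) with hΨdef
  have hinv : InvOn Ψ Φ (Ici a) (Ici 0) := hbij.invOn_invFunOn
  have hΨmaps : MapsTo Ψ (Ici 0) (Ici a) := hbij.surjOn.mapsTo_invFunOn
  have hΨright : ∀ y ∈ Ici (0:ℝ), Φ (Ψ y) = y := fun y hy => hinv.2 hy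
  have hΨleft : ∀ x ∈ Ici a, Ψ (Φ x) = x := fun x hx => hinv.1 hx
  have hΨmono : StrictMonoOn Ψ (Ici 0) := by
    intro y1 h1 y2 h2 h12
    by_contra hle
    push_neg at hle
    have := hmono.monotoneOn (hΨmaps h2) (hΨmaps h1) hle
    rw [hΨright y1 h1, hΨright y2 h2] at this
    exact absurd h12 (not_lt.mpr this)
  have hΨsurj : SurjOn Ψ (Ici 0) (Ici a) := by
    intro x hx
    exact ⟨Φ x, hmaps hx, hΨleft x hx⟩
  have hΨ0 : Ψ 0 = a := by
    have := hΨleft a self_mem_Ici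
    rwa [hΦa] at this
  have hΨcont : ∀ y ∈ Ici (0:ℝ), ContinuousWithinAt Ψ (Ici 0) y := by
    intro y hy
    have hright : ContinuousWithinAt Ψ (Ici y) y := by
      apply hΨmono.continuousWithinAt_right_of_surjOn
        (mem_of_superset self_mem_nhdsWithin (Ici_subset_Ici.mpr hy))
      intro b hb
      exact hΨsurj (mem_Ici.mpr (le_trans (mem_Ici.mp (hΨmaps hy)) (le_of_lt hb)))
    rcases eq_or_lt_of_le (mem_Ici.mp hy) with h0 | h0
    · rw [← h0] at hright ⊢
      exact hright
    · have hleft : ContinuousWithinAt Ψ (Iic y) y := by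
        apply hΨmono.continuousWithinAt_left_of_exists_between
          (mem_nhdsWithin_of_mem_nhds (Ici_mem_nhds h0))
        intro b hb
        have hya : a < Ψ y := by
          have := hΨmono self_mem_Ici hy h0
          rwa [hΨ0] at this
        rcases le_or_gt b a with hba | hab
        · exact ⟨0, self_mem_Ici, by rw [hΨ0]; exact ⟨hba, hya⟩⟩
        · refine ⟨Φ b, hmaps (mem_Ici.mpr hab.le), ?_⟩
          rw [hΨleft b (mem_Ici.mpr hab.le)]
          exact ⟨le_refl b, hb⟩
      exact (continuousAt_iff_continuous_left_right.mpr ⟨hleft, hright⟩).continuousWithinAt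
  have hΨinj : ∀ y' ∈ Ici (0:ℝ), ∀ y ∈ Ici (0:ℝ), y' ≠ y → Ψ y' ≠ Ψ y := by
    intro y' hy' y hy hne heq
    apply hne
    rw [← hΨright y' hy', ← hΨright y hy, heq]
  have hΨderiv : ∀ y ∈ Ici (0:ℝ), HasDerivWithinAt Ψ (F (Ψ y))⁻¹ (Ici 0) y := by
    intro y hy
    exact inv_hasDerivWithinAt rfl (hderiv (Ψ y) (hΨmaps hy)) (hFpos (Ψ y) (hΨmaps hy)).ne'
      (hΨcont y hy) hΨmaps (fun y' hy' hne => hΨinj y' hy' y hy hne)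
      hΨright hy
  -- second part
  intro u hu hu'' w hw y hy
  have hUD : UniqueDiffOn ℝ (Ici a) := uniqueDiffOn_Ici a
  have hUD0 : UniqueDiffOn ℝ (Ici (0:ℝ)) := uniqueDiffOn_Ici 0
  have hsgn : (∀ t ∈ Ici a, 0 < f t) ∨ (∀ t ∈ Ici a, f t < 0) := by
    by_contra hcon
    push_neg at hcon
    obtain ⟨⟨x1, hx1, h1⟩, ⟨x2, hx2, h2⟩⟩ := hcon
    have hsub : uIcc x1 x2 ⊆ Ici a := by
      intro t ht
      rcases mem_uIcc.mp ht with ⟨h, _⟩ | ⟨h, _⟩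
      · exact le_trans hx1 h
      · exact le_trans hx2 h
    have h0 : (0:ℝ) ∈ uIcc (f x1) (f x2) := mem_uIcc.mpr (Or.inl ⟨h1, h2⟩)
    obtain ⟨z, hz, hz0⟩ := intermediate_value_uIcc (hfc.mono hsub) h0
    exact hf0 z (hsub hz) hz0
  have hA : ContDiffOn ℝ 2 (fun t => |f t|) (Ici a) := by
    rcases hsgn with h | h
    · exact hf.congr (fun t ht => abs_of_pos (h t ht))
    · exact hf.neg.congr (fun t ht => abs_of_neg (h t ht))
  have hApos : ∀ t ∈ Ici a, 0 < |f t| := fun t ht => abs_pos.mpr (hf0 t ht)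
  set A' : ℝ → ℝ := derivWithin (fun t => |f t|) (Ici a) with hA'def
  set A'' : ℝ → ℝ := derivWithin A' (Ici a) with hA''def
  have hAd : ∀ t ∈ Ici a, HasDerivWithinAt (fun t => |f t|) (A' t) (Ici a) t :=
    fun t ht => ((hA.differentiableOn (by norm_num)) t ht).hasDerivWithinAt
  have hA'c : ContDiffOn ℝ 1 A' (Ici a) := hA.derivWithin hUD (by norm_num)
  have hA'd : ∀ t ∈ Ici a, HasDerivWithinAt A' (A'' t) (Ici a) t :=
    fun t ht => ((hA'c.differentiableOn (by norm_num)) t ht).hasDerivWithinAt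
  set u' : ℝ → ℝ := derivWithin u (Ici a) with hu'def
  have hud : ∀ t ∈ Ici a, HasDerivWithinAt u (u' t) (Ici a) t :=
    fun t ht => ((hu.differentiableOn (by norm_num)) t ht).hasDerivWithinAt
  have hu'c : ContDiffOn ℝ 1 u' (Ici a) := hu.derivWithin hUD (by norm_num)
  have hu'd : ∀ t ∈ Ici a, HasDerivWithinAt u' ((f t + g t) * u t) (Ici a) t := by
    intro t ht
    have h := ((hu'c.differentiableOn (by norm_num)) t ht).hasDerivWithinAt
    rwa [hu'' t ht] at h
  set E1 : ℝ → ℝ := fun t => A' t * ((1:ℝ)/4) * |f t| ^ ((1:ℝ)/4 - 1) * u t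
      + |f t| ^ ((1:ℝ)/4) * u' t with hE1def
  have hhd : ∀ t ∈ Ici a, HasDerivWithinAt (fun t => |f t| ^ ((1:ℝ)/4) * u t) (E1 t) (Ici a) t :=
    fun t ht => ((hAd t ht).rpow_const (Or.inl (hApos t ht).ne')).mul (hud t ht)
  have hwd : ∀ y' ∈ Ici (0:ℝ), HasDerivWithinAt w (E1 (Ψ y') * (F (Ψ y'))⁻¹) (Ici 0) y' := by
    intro y' hy'
    have hcomp := (hhd (Ψ y') (hΨmaps hy')).comp y' (hΨderiv y' hy') hΨmaps
    exact hcomp.congr (fun z _ => hw z) (hw y')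
  have hw1eq : ∀ y' ∈ Ici (0:ℝ), derivWithin w (Ici 0) y' = E1 (Ψ y') * (F (Ψ y'))⁻¹ :=
    fun y' hy' => (hwd y' hy').derivWithin (hUD0 y' hy')
  set x := Ψ y with hxdef
  have hxa : x ∈ Ici a := hΨmaps hy
  have hvpos : (0:ℝ) < |f x| := hApos x hxa
  -- second derivative of the transformed function
  have c2 : HasDerivWithinAt (fun t => |f t| ^ ((1:ℝ)/4 - 1))
      (A' x * ((1:ℝ)/4 - 1) * |f x| ^ ((1:ℝ)/4 - 1 - 1)) (Ici a) x :=
    (hAd x hxa).rpow_const (Or.inl hvpos.ne')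
  have c3 := (((hA'd x hxa).mul_const ((1:ℝ)/4)).mul c2).mul (hud x hxa)
  have c5 := ((hAd x hxa).rpow_const (Or.inl hvpos.ne') :
      HasDerivWithinAt (fun t => |f t| ^ ((1:ℝ)/4))
        (A' x * ((1:ℝ)/4) * |f x| ^ ((1:ℝ)/4 - 1)) (Ici a) x).mul (hu'd x hxa)
  have hFdx : HasDerivWithinAt F (A' x * ((1:ℝ)/2) * |f x| ^ ((1:ℝ)/2 - 1)) (Ici a) x :=
    (hAd x hxa).rpow_const (Or.inl hvpos.ne')
  have hFinv := hFdx.inv (hFpos x hxa).ne'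
  have hKd : HasDerivWithinAt (fun t => E1 t * (F t)⁻¹)
      (((A'' x * ((1:ℝ)/4) * |f x| ^ ((1:ℝ)/4 - 1)
          + A' x * ((1:ℝ)/4) * (A' x * ((1:ℝ)/4 - 1) * |f x| ^ ((1:ℝ)/4 - 1 - 1))) * u x
          + A' x * ((1:ℝ)/4) * |f x| ^ ((1:ℝ)/4 - 1) * u' x
        + (A' x * ((1:ℝ)/4) * |f x| ^ ((1:ℝ)/4 - 1) * u' x
          + |f x| ^ ((1:ℝ)/4) * ((f x + g x) * u x))) * (F x)⁻¹
        + E1 x * (-(A' x * ((1:ℝ)/2) * |f x| ^ ((1:ℝ)/2 - 1)) / F x ^ 2)) (Ici a) x :=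
    (c3.add c5).mul hFinv
  have hsecond : derivWithin (derivWithin w (Ici 0)) (Ici 0) y
      = (((A'' x * ((1:ℝ)/4) * |f x| ^ ((1:ℝ)/4 - 1)
          + A' x * ((1:ℝ)/4) * (A' x * ((1:ℝ)/4 - 1) * |f x| ^ ((1:ℝ)/4 - 1 - 1))) * u x
          + A' x * ((1:ℝ)/4) * |f x| ^ ((1:ℝ)/4 - 1) * u' x
        + (A' x * ((1:ℝ)/4) * |f x| ^ ((1:ℝ)/4 - 1) * u' x
          + |f x| ^ ((1:ℝ)/4) * ((f x + g x) * u x))) * (F x)⁻¹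
        + E1 x * (-(A' x * ((1:ℝ)/2) * |f x| ^ ((1:ℝ)/2 - 1)) / F x ^ 2)) * (F x)⁻¹ := by
    have hcongr : derivWithin (derivWithin w (Ici 0)) (Ici 0) y
        = derivWithin (fun y' => E1 (Ψ y') * (F (Ψ y'))⁻¹) (Ici 0) y :=
      derivWithin_congr (fun y' hy' => hw1eq y' hy') (hw1eq y hy)
    rw [hcongr]
    exact (hKd.comp y (hΨderiv y hy) hΨmaps).derivWithin (hUD0 y hy)
  -- the psiW second derivative
  have hqd : ∀ t ∈ Ici a, HasDerivWithinAt (fun t => |f t| ^ (-(1 / 4 : ℝ)))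
      (A' t * (-(1 / 4 : ℝ)) * |f t| ^ (-(1 / 4 : ℝ) - 1)) (Ici a) t :=
    fun t ht => (hAd t ht).rpow_const (Or.inl (hApos t ht).ne')
  have hq1eq : EqOn (derivWithin (fun t => |f t| ^ (-(1 / 4 : ℝ))) (Ici a))
      (fun t => A' t * (-(1 / 4 : ℝ)) * |f t| ^ (-(1 / 4 : ℝ) - 1)) (Ici a) :=
    fun t ht => (hqd t ht).derivWithin (hUD t ht)
  have hQ1d : HasDerivWithinAt
      (fun t => A' t * (-(1 / 4 : ℝ)) * |f t| ^ (-(1 / 4 : ℝ) - 1))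
      (A'' x * (-(1 / 4 : ℝ)) * |f x| ^ (-(1 / 4 : ℝ) - 1)
        + A' x * (-(1 / 4 : ℝ)) * (A' x * (-(1 / 4 : ℝ) - 1) * |f x| ^ (-(1 / 4 : ℝ) - 1 - 1)))
      (Ici a) x :=
    ((hA'd x hxa).mul_const (-(1 / 4 : ℝ))).mul
      ((hAd x hxa).rpow_const (Or.inl hvpos.ne'))
  have hq'' : derivWithin (derivWithin (fun t => |f t| ^ (-(1 / 4 : ℝ))) (Ici a)) (Ici a) x
      = A'' x * (-(1 / 4 : ℝ)) * |f x| ^ (-(1 / 4 : ℝ) - 1)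
        + A' x * (-(1 / 4 : ℝ)) * (A' x * (-(1 / 4 : ℝ) - 1) * |f x| ^ (-(1 / 4 : ℝ) - 1 - 1)) := by
    rw [derivWithin_congr hq1eq (hq1eq hxa)]
    exact hQ1d.derivWithin (hUD x hxa)
  -- final algebraic identity
  rw [hsecond, hw y, ← hxdef]
  simp only [psiW]
  rw [hq'', hE1def]
  simp only [hFdef]
  have r7 : |f x| ^ ((1:ℝ)/4 - 1 - 1) = ((|f x| ^ ((1:ℝ)/4)) ^ (7:ℕ))⁻¹ :=
    rpow_eq_pow_inv _ hvpos _ 7 (by norm_num)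
  have r3 : |f x| ^ ((1:ℝ)/4 - 1) = ((|f x| ^ ((1:ℝ)/4)) ^ (3:ℕ))⁻¹ :=
    rpow_eq_pow_inv _ hvpos _ 3 (by norm_num)
  have rm2 : |f x| ^ ((1:ℝ)/2 - 1) = ((|f x| ^ ((1:ℝ)/4)) ^ (2:ℕ))⁻¹ :=
    rpow_eq_pow_inv _ hvpos _ 2 (by norm_num)
  have r2 : |f x| ^ ((1:ℝ)/2) = (|f x| ^ ((1:ℝ)/4)) ^ (2:ℕ) :=
    rpow_eq_pow _ hvpos.le _ 2 (by norm_num)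
  have r9 : |f x| ^ (-(1 / 4 : ℝ) - 1 - 1) = ((|f x| ^ ((1:ℝ)/4)) ^ (9:ℕ))⁻¹ :=
    rpow_eq_pow_inv _ hvpos _ 9 (by norm_num)
  have r5 : |f x| ^ (-(1 / 4 : ℝ) - 1) = ((|f x| ^ ((1:ℝ)/4)) ^ (5:ℕ))⁻¹ :=
    rpow_eq_pow_inv _ hvpos _ 5 (by norm_num)
  have r1 : |f x| ^ (-(1 / 4 : ℝ)) = ((|f x| ^ ((1:ℝ)/4)) ^ (1:ℕ))⁻¹ :=
    rpow_eq_pow_inv _ hvpos _ 1 (by norm_num)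
  have rq : |f x| ^ ((1:ℝ)/2) = (|f x| ^ ((1:ℝ)/4)) ^ (2:ℕ) := r2
  rw [r7, r3, rm2, r9, r5, r1, r2]
  have hspos : (0:ℝ) < |f x| ^ ((1:ℝ)/4) := Real.rpow_pos_of_pos hvpos _
  set s : ℝ := |f x| ^ ((1:ℝ)/4) with hsdef
  have r4 : |f x| = s ^ (4:ℕ) := by
    rw [hsdef, ← Real.rpow_natCast (|f x| ^ ((1:ℝ)/4)) 4, ← Real.rpow_mul hvpos.le]
    norm_num
  rw [r4]
  field_simp
  ring
end

section
/- Let a > 0 and let g be such that s·g(s) is integrable on (a,∞). If z ∈ C²([a,∞)) satisfies z(a) = 1, z'(a) = 0 and z''(x) + (2/x)·z'(x) = g(x)·z(x) on [a,∞), then z'(x) = x^{-2}·∫ₐ^x s²·g(s)·z(s) ds, |z(x) − 1| ≤ ∫ₐ^x s·|g(s)·z(s)| ds, and |z(x)| ≤ exp( ∫ₐ^x s·|g(s)| ds ) for all x ∈ [a,∞); in particular z is bounded on [a,∞). -/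
open Set Filter MeasureTheory
open scoped Topology

/-- If `a > 0`, `s·g(s)` is integrable on `(a,∞)` and `z ∈ C²([a,∞))` satisfies
`z(a) = 1`, `z'(a) = 0` and `z'' + (2/x) z' = g z` on `[a,∞)`, then
`z'(x) = x⁻² ∫ₐ^x s² g(s) z(s) ds`, `|z(x) - 1| ≤ ∫ₐ^x s |g(s) z(s)| ds` and
`|z(x)| ≤ exp(∫ₐ^x s |g(s)| ds)` for all `x ≥ a`; in particular `z` is bounded
on `[a,∞)`. -/
theorem z_estimates_f_zero
    (a : ℝ) (ha : 0 < a)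
    (g : ℝ → ℝ) (hg : IntegrableOn (fun s => s * g s) (Ioi a))
    (z : ℝ → ℝ) (hz : ContDiffOn ℝ 2 z (Ici a))
    (hza : z a = 1)
    (hz'a : derivWithin z (Ici a) a = 0)
    (hode : ∀ x ∈ Ici a,
      derivWithin (derivWithin z (Ici a)) (Ici a) x +
        (2 / x) * derivWithin z (Ici a) x = g x * z x) :
    (∀ x ∈ Ici a,
      derivWithin z (Ici a) x = (x ^ 2)⁻¹ * ∫ s in a..x, s ^ 2 * g s * z s) ∧
    (∀ x ∈ Ici a, |z x - 1| ≤ ∫ s in a..x, s * |g s * z s|) ∧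
    (∀ x ∈ Ici a, |z x| ≤ Real.exp (∫ s in a..x, s * |g s|)) ∧
    ∃ C : ℝ, ∀ x ∈ Ici a, |z x| ≤ C := by
  set z1 := derivWithin z (Ici a) with hz1def
  set z2 := derivWithin z1 (Ici a) with hz2def
  have hz1C : ContDiffOn ℝ 1 z1 (Ici a) :=
    hz.derivWithin (uniqueDiffOn_Ici a) (by norm_num)
  have hz1cont : ContinuousOn z1 (Ici a) := hz1C.continuousOn
  have hzcont : ContinuousOn z (Ici a) := hz.continuousOn
  have hz2cont : ContinuousOn z2 (Ici a) :=
    (hz1C.derivWithin (m := 0) (uniqueDiffOn_Ici a) (by norm_num)).continuousOn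
  have hz1d : ∀ x ∈ Ici a, HasDerivWithinAt z (z1 x) (Ici a) x := fun x hx =>
    (hz.differentiableOn (by norm_num) x hx).hasDerivWithinAt
  have hz2d : ∀ x ∈ Ici a, HasDerivWithinAt z1 (z2 x) (Ici a) x := fun x hx =>
    (hz1C.differentiableOn (by norm_num) x hx).hasDerivWithinAt
  -- g*z is continuous on [a,∞)
  have hgzcont : ContinuousOn (fun s => g s * z s) (Ici a) := by
    have : ContinuousOn (fun s => z2 s + (2 / s) * z1 s) (Ici a) := by
      refine hz2cont.add (ContinuousOn.mul ?_ hz1cont)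
      exact continuousOn_const.div continuousOn_id fun s hs => ne_of_gt (lt_of_lt_of_le ha hs)
    exact this.congr fun s hs => (hode s hs).symm
  -- Part 1
  have key1 : ∀ x ∈ Ici a, (∫ s in a..x, s ^ 2 * g s * z s) = x ^ 2 * z1 x := by
    intro x hx
    have hax : a ≤ x := hx
    have hIcc : Icc a x ⊆ Ici a := Icc_subset_Ici_self
    have hcont : ContinuousOn (fun s => s ^ 2 * g s * z s) (Icc a x) := by
      have : ContinuousOn (fun s : ℝ => s ^ 2 * (g s * z s)) (Ici a) :=
        (continuousOn_pow 2).mul hgzcont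
      exact (this.congr fun s _ => by ring).mono hIcc
    have hint : IntervalIntegrable (fun s => s ^ 2 * g s * z s) volume a x :=
      hcont.intervalIntegrable_of_Icc hax
    have := intervalIntegral.integral_eq_sub_of_hasDeriv_right_of_le hax
      (f := fun s => s ^ 2 * z1 s) (f' := fun s => s ^ 2 * g s * z s)
      (((continuousOn_pow 2).mul hz1cont).mono hIcc)
      (fun t ht => by
        have hta : t ∈ Ici a := le_of_lt ht.1
        have h1 : HasDerivWithinAt (fun s => s ^ 2 * z1 s)
            (((2:ℕ) * t ^ (2-1)) * z1 t + t ^ 2 * z2 t) (Ici a) t :=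
          (hasDerivAt_pow 2 t).hasDerivWithinAt.mul (hz2d t hta)
        have h2 : HasDerivAt (fun s => s ^ 2 * z1 s)
            (((2:ℕ) * t ^ (2-1)) * z1 t + t ^ 2 * z2 t) t :=
          h1.hasDerivAt (Ici_mem_nhds ht.1)
        have ht0 : t ≠ 0 := ne_of_gt (lt_trans ha ht.1)
        have heq : ((2:ℕ) * t ^ (2-1)) * z1 t + t ^ 2 * z2 t = t ^ 2 * g t * z t := by
          have := hode t hta
          push_cast
          field_simp at this
          linear_combination t * this
        rw [heq] at h2
        exact h2.hasDerivWithinAt) hint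
    simp only [hz'a, mul_zero, sub_zero] at this
    exact this
  have hx0 : ∀ x ∈ Ici a, (0:ℝ) < x := fun x hx => lt_of_lt_of_le ha hx
  have part1 : ∀ x ∈ Ici a,
      z1 x = (x ^ 2)⁻¹ * ∫ s in a..x, s ^ 2 * g s * z s := by
    intro x hx
    rw [key1 x hx, inv_mul_cancel_left₀ (pow_ne_zero 2 (ne_of_gt (hx0 x hx)))]
  -- key identity for z(x) - 1 : ∫ₐˣ s g z = x z1 x + z x - 1
  have key2 : ∀ x ∈ Ici a, (∫ s in a..x, s * (g s * z s)) = x * z1 x + z x - 1 := by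
    intro x hx
    have hax : a ≤ x := hx
    have hIcc : Icc a x ⊆ Ici a := Icc_subset_Ici_self
    have hcont : ContinuousOn (fun s => s * (g s * z s)) (Icc a x) :=
      (continuousOn_id.mul hgzcont).mono hIcc
    have hint : IntervalIntegrable (fun s => s * (g s * z s)) volume a x :=
      hcont.intervalIntegrable_of_Icc hax
    have := intervalIntegral.integral_eq_sub_of_hasDeriv_right_of_le hax
      (f := fun s => s * z1 s + z s) (f' := fun s => s * (g s * z s))
      (((continuousOn_id.mul hz1cont).add hzcont).mono hIcc)
      (fun t ht => by
        have hta : t ∈ Ici a := le_of_lt ht.1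
        have h1 : HasDerivWithinAt (fun s => s * z1 s + z s)
            ((1 * z1 t + t * z2 t) + z1 t) (Ici a) t :=
          ((hasDerivAt_id t).hasDerivWithinAt.mul (hz2d t hta)).add (hz1d t hta)
        have h2 : HasDerivAt (fun s => s * z1 s + z s)
            ((1 * z1 t + t * z2 t) + z1 t) t := h1.hasDerivAt (Ici_mem_nhds ht.1)
        have ht0 : t ≠ 0 := ne_of_gt (lt_trans ha ht.1)
        have heq : (1 * z1 t + t * z2 t) + z1 t = t * (g t * z t) := by
          have := hode t hta
          field_simp at this
          linear_combination this
        rw [heq] at h2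
        exact h2.hasDerivWithinAt) hint
    simp only [hza, hz'a, mul_zero, zero_add] at this
    rw [this]
  -- Part 2
  have part2 : ∀ x ∈ Ici a, |z x - 1| ≤ ∫ s in a..x, s * |g s * z s| := by
    intro x hx
    have hax : a ≤ x := hx
    have hxpos : (0:ℝ) < x := hx0 x hx
    have hIcc : Icc a x ⊆ Ici a := Icc_subset_Ici_self
    have hcont1 : ContinuousOn (fun s => s * (g s * z s)) (Icc a x) :=
      (continuousOn_id.mul hgzcont).mono hIcc
    have hcont2 : ContinuousOn (fun s => s ^ 2 * g s * z s) (Icc a x) := by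
      have : ContinuousOn (fun s : ℝ => s ^ 2 * (g s * z s)) (Ici a) :=
        (continuousOn_pow 2).mul hgzcont
      exact (this.congr fun s _ => by ring).mono hIcc
    have hint1 : IntervalIntegrable (fun s => s * (g s * z s)) volume a x :=
      hcont1.intervalIntegrable_of_Icc hax
    have hint2 : IntervalIntegrable (fun s => x⁻¹ * (s ^ 2 * g s * z s)) volume a x :=
      (hcont2.const_smul x⁻¹).intervalIntegrable_of_Icc hax
    have hrepr : z x - 1 = ∫ s in a..x, (s - x⁻¹ * s ^ 2) * (g s * z s) := by
      have e1 : (fun s => (s - x⁻¹ * s ^ 2) * (g s * z s)) =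
          fun s => s * (g s * z s) - x⁻¹ * (s ^ 2 * g s * z s) := by
        funext s; ring
      rw [e1, intervalIntegral.integral_sub hint1 hint2,
        intervalIntegral.integral_const_mul, key2 x hx, key1 x hx]
      field_simp
      ring
    rw [hrepr]
    calc |∫ s in a..x, (s - x⁻¹ * s ^ 2) * (g s * z s)|
        ≤ ∫ s in a..x, |(s - x⁻¹ * s ^ 2) * (g s * z s)| :=
          intervalIntegral.abs_integral_le_integral_abs hax
      _ ≤ ∫ s in a..x, s * |g s * z s| := by
          apply intervalIntegral.integral_mono_on hax
          · exact ((hcont1.sub (hcont2.const_smul x⁻¹)).congr (g := fun s => (s - x⁻¹ * s ^ 2) * (g s * z s))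
              (fun s _ => by simp only [Pi.sub_apply, Pi.smul_apply, smul_eq_mul]; ring)).abs.intervalIntegrable_of_Icc hax
          · exact (continuousOn_id.mul hgzcont.abs).mono hIcc |>.intervalIntegrable_of_Icc hax
          · intro s hs
            have hs0 : (0:ℝ) < s := lt_of_lt_of_le ha hs.1
            rw [abs_mul]
            have h1 : 0 ≤ s - x⁻¹ * s ^ 2 := by
              have : x⁻¹ * s ^ 2 ≤ s := by
                rw [inv_mul_le_iff₀ hxpos]
                nlinarith [hs.2]
              linarith
            have h2 : |s - x⁻¹ * s ^ 2| ≤ s := by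
              rw [abs_of_nonneg h1]
              have : 0 ≤ x⁻¹ * s ^ 2 := by positivity
              linarith
            exact mul_le_mul_of_nonneg_right h2 (abs_nonneg _)
  -- integrability of s * |g s| on (a, ∞)
  have hk : IntegrableOn (fun s => s * |g s|) (Ioi a) := by
    refine IntegrableOn.congr_fun (hg.abs) (fun s hs => ?_) measurableSet_Ioi
    rw [abs_mul, abs_of_pos (lt_trans ha hs)]
  -- Part 3 via Gronwall
  set q : ℝ → ℝ := fun s => s * |g s * z s| with hqdef
  have hqcont : ContinuousOn q (Ici a) := continuousOn_id.mul hgzcont.abs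
  set H : ℝ → ℝ := fun x => ∫ s in a..x, q s with hHdef
  have hHnonneg : ∀ x ∈ Ici a, 0 ≤ H x := fun x hx =>
    intervalIntegral.integral_nonneg hx fun s hs => by
      have : (0:ℝ) < s := lt_of_lt_of_le ha hs.1
      positivity
  have hzH : ∀ x ∈ Ici a, |z x| ≤ 1 + H x := by
    intro x hx
    have := part2 x hx
    calc |z x| = |(z x - 1) + 1| := by ring_nf
      _ ≤ |z x - 1| + 1 := by
          calc |(z x - 1) + 1| ≤ |z x - 1| + |(1:ℝ)| := abs_add_le _ _
            _ = |z x - 1| + 1 := by rw [abs_one]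
      _ ≤ 1 + H x := by linarith [this]
  have part3 : ∀ x ∈ Ici a, |z x| ≤ Real.exp (∫ s in a..x, s * |g s|) := by
    intro x hx
    have hax : a ≤ x := hx
    have hIcc : Icc a x ⊆ Ici a := Icc_subset_Ici_self
    have hqIntOn : IntegrableOn q (uIcc a x) := by
      rw [uIcc_of_le hax]
      exact (hqcont.mono hIcc).integrableOn_Icc
    have hHcont : ContinuousOn H (Icc a x) := by
      have := intervalIntegral.continuousOn_primitive_interval (a := a) (b := x) hqIntOn
      rwa [uIcc_of_le hax] at this
    have hkIccInt : IntegrableOn (fun s => s * |g s|) (Icc a x) := by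
      rw [integrableOn_Icc_iff_integrableOn_Ioc]
      exact hk.mono_set Ioc_subset_Ioi_self
    -- log (1 + H) has right derivative q t / (1 + H t) on (a, x)
    have hmain : Real.log (1 + H x) - Real.log (1 + H a) ≤ ∫ s in a..x, s * |g s| := by
      apply intervalIntegral.sub_le_integral_of_hasDeriv_right_of_le hax
        (g := fun t => Real.log (1 + H t)) (g' := fun t => q t / (1 + H t))
      · exact Real.continuousOn_log.comp (continuousOn_const.add hHcont)
          fun t ht => by
            have := hHnonneg t (hIcc ht)
            simp only [mem_compl_iff, mem_singleton_iff]
            intro h; linarith [h ▸ this]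
      · intro t ht
        have hta : t ∈ Ici a := le_of_lt ht.1
        have hqt : IntervalIntegrable q volume a t :=
          ((hqcont.mono (Icc_subset_Ici_self : Icc a t ⊆ Ici a)).intervalIntegrable_of_Icc hta)
        have hmeas : StronglyMeasurableAtFilter q (𝓝 t) volume :=
          (hqcont.mono (Ioi_subset_Ici_self (a := a))).stronglyMeasurableAtFilter isOpen_Ioi t ht.1
        have hqct : ContinuousAt q t :=
          (hqcont t hta).continuousAt (Ici_mem_nhds ht.1)
        have hHd : HasDerivAt H (q t) t :=
          intervalIntegral.integral_hasDerivAt_right hqt hmeas hqct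
        have hne : (1:ℝ) + H t ≠ 0 := by
          have := hHnonneg t hta; intro h; linarith [h ▸ this]
        have hlog := ((hasDerivAt_const t (1:ℝ)).add hHd).log hne
        simpa using hlog.hasDerivWithinAt
      · exact hkIccInt
      · intro t ht
        have hta : t ∈ Ici a := le_of_lt ht.1
        have ht0 : (0:ℝ) < t := lt_trans ha ht.1
        have hHt : 0 ≤ H t := hHnonneg t hta
        have hpos : (0:ℝ) < 1 + H t := by linarith
        rw [div_le_iff₀ hpos]
        have hqeq : q t = (t * |g t|) * |z t| := by
          simp only [hqdef, abs_mul]; ring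
        rw [hqeq]
        have hzt : |z t| ≤ 1 + H t := hzH t hta
        have : 0 ≤ t * |g t| := by positivity
        exact mul_le_mul_of_nonneg_left hzt this
    have hHa : H a = 0 := by simp [hHdef]
    rw [hHa, add_zero, Real.log_one, sub_zero] at hmain
    have hpos : (0:ℝ) < 1 + H x := by linarith [hHnonneg x hx]
    calc |z x| ≤ 1 + H x := hzH x hx
      _ = Real.exp (Real.log (1 + H x)) := (Real.exp_log hpos).symm
      _ ≤ Real.exp (∫ s in a..x, s * |g s|) := Real.exp_le_exp.2 hmain
  refine ⟨part1, part2, part3, Real.exp (∫ s in Ioi a, s * |g s|), fun x hx => ?_⟩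
  have hax : a ≤ x := hx
  refine (part3 x hx).trans (Real.exp_le_exp.2 ?_)
  rw [intervalIntegral.integral_of_le hax]
  apply setIntegral_mono_set hk
  · refine (ae_restrict_iff' measurableSet_Ioi).2 (ae_of_all _ fun s hs => ?_)
    have : (0:ℝ) < s := lt_trans ha hs
    positivity
  · exact (Ioc_subset_Ioi_self).eventuallyLE
end

section
/- Let a > 0 and let h : [a,∞) → ℝ be a function with s ↦ s·|h(s)| integrable on (a,∞). If z' is given by z'(x) = x^{-2}·∫ₐ^x s²·h(s) ds, then x·z'(x) → 0 as x → ∞; more precisely |x·z'(x)| ≤ √(a/x)·∫ₐ^{√(ax)} s·|h(s)| ds + ∫_{√(ax)}^x s·|h(s)| ds for x ≥ a, and the right-hand side tends to 0 as x → ∞. -/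
open Set Filter MeasureTheory
open scoped Topology

/-- If `a > 0` and `s ↦ s·|h(s)|` is integrable on `(a,∞)`, and
`z'(x) = x⁻² ∫ₐ^x s² h(s) ds`, then `x·z'(x) → 0` as `x → ∞`; more precisely
`|x z'(x)| ≤ √(a/x) ∫ₐ^{√(ax)} s|h(s)| ds + ∫_{√(ax)}^x s|h(s)| ds` for `x ≥ a`,
and the right-hand side tends to `0` as `x → ∞`. -/
theorem xz'_tendsto_zero
    (a : ℝ) (ha : 0 < a)
    (h : ℝ → ℝ) (hh : IntegrableOn (fun s => s * |h s|) (Ioi a))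
    (z' : ℝ → ℝ)
    (hz' : ∀ x, z' x = (x ^ 2)⁻¹ * ∫ s in a..x, s ^ 2 * h s) :
    Tendsto (fun x => x * z' x) atTop (𝓝 0) ∧
    (∀ x, a ≤ x →
      |x * z' x| ≤ Real.sqrt (a / x) * (∫ s in a..Real.sqrt (a * x), s * |h s|) +
        ∫ s in Real.sqrt (a * x)..x, s * |h s|) ∧
    Tendsto (fun x => Real.sqrt (a / x) * (∫ s in a..Real.sqrt (a * x), s * |h s|) +
        ∫ s in Real.sqrt (a * x)..x, s * |h s|) atTop (𝓝 0) := by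
  -- interval integrability of s|h s|
  have hint : ∀ c d : ℝ, a ≤ c → c ≤ d →
      IntervalIntegrable (fun s => s * |h s|) volume c d := by
    intro c d hac hcd
    rw [intervalIntegrable_iff_integrableOn_Ioc_of_le hcd]
    exact hh.mono_set (fun s hs => lt_of_le_of_lt hac hs.1)
  -- interval integrability of s²|h s|
  have hint2 : ∀ c d : ℝ, a ≤ c → c ≤ d →
      IntervalIntegrable (fun s => s ^ 2 * |h s|) volume c d := by
    intro c d hac hcd
    rw [intervalIntegrable_iff_integrableOn_Ioc_of_le hcd]
    have h1 : IntegrableOn (fun s => s * |h s|) (Ioc c d) :=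
      hh.mono_set (fun s hs => lt_of_le_of_lt hac hs.1)
    refine Integrable.mono' (h1.const_mul d) ?_ ?_
    · exact ((measurable_id.aestronglyMeasurable.mul h1.1).congr
        (by filter_upwards with s; simp only [Pi.mul_apply, id_eq]; ring))
    · filter_upwards [MeasureTheory.ae_restrict_mem measurableSet_Ioc] with s hs
      have hs0 : 0 < s := lt_trans (lt_of_lt_of_le ha hac) hs.1
      have habs : (0:ℝ) ≤ |h s| := abs_nonneg _
      rw [Real.norm_eq_abs, abs_of_nonneg (by positivity)]
      calc s ^ 2 * |h s| = s * (s * |h s|) := by ring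
        _ ≤ d * (s * |h s|) := mul_le_mul_of_nonneg_right hs.2 (mul_nonneg hs0.le habs)
  -- the pointwise bound
  have key : ∀ x, a ≤ x →
      |x * z' x| ≤ Real.sqrt (a / x) * (∫ s in a..Real.sqrt (a * x), s * |h s|) +
        ∫ s in Real.sqrt (a * x)..x, s * |h s| := by
    intro x hx
    have hx0 : 0 < x := lt_of_lt_of_le ha hx
    set m := Real.sqrt (a * x) with hm
    have hm0 : 0 ≤ m := Real.sqrt_nonneg _
    have ham : a ≤ m := by
      have h1 : Real.sqrt (a * a) ≤ Real.sqrt (a * x) := Real.sqrt_le_sqrt (by nlinarith)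
      rwa [Real.sqrt_mul_self ha.le] at h1
    have hmx : m ≤ x := by
      have h1 : Real.sqrt (a * x) ≤ Real.sqrt (x * x) := Real.sqrt_le_sqrt (by nlinarith)
      rwa [Real.sqrt_mul_self hx0.le] at h1
    have hsqrt : Real.sqrt (a / x) = m / x := by
      rw [hm, eq_div_iff hx0.ne']
      nth_rewrite 2 [show x = Real.sqrt (x ^ 2) from (Real.sqrt_sq hx0.le).symm]
      rw [← Real.sqrt_mul (div_nonneg ha.le hx0.le)]
      congr 1
      field_simp
    -- step 1: |x z' x| ≤ x⁻¹ ∫ₐ^x s²|h|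
    have step1 : |x * z' x| ≤ x⁻¹ * ∫ s in a..x, s ^ 2 * |h s| := by
      rw [hz' x]
      have e1 : x * ((x ^ 2)⁻¹ * ∫ s in a..x, s ^ 2 * h s)
          = x⁻¹ * ∫ s in a..x, s ^ 2 * h s := by
        field_simp
      rw [e1, abs_mul, abs_of_nonneg (inv_nonneg.2 hx0.le)]
      have h2 : |∫ s in a..x, s ^ 2 * h s| ≤ ∫ s in a..x, |s ^ 2 * h s| :=
        intervalIntegral.abs_integral_le_integral_abs hx
      have h3 : (∫ s in a..x, |s ^ 2 * h s|) = ∫ s in a..x, s ^ 2 * |h s| := by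
        refine intervalIntegral.integral_congr fun s _ => ?_
        rw [abs_mul, abs_pow, sq_abs]
      rw [h3] at h2
      exact mul_le_mul_of_nonneg_left h2 (inv_nonneg.2 hx0.le)
    -- split the integral
    have hsplit : (∫ s in a..x, s ^ 2 * |h s|)
        = (∫ s in a..m, s ^ 2 * |h s|) + ∫ s in m..x, s ^ 2 * |h s| :=
      (intervalIntegral.integral_add_adjacent_intervals
        (hint2 a m le_rfl ham) (hint2 m x ham hmx)).symm
    -- bound the two pieces
    have b1 : (∫ s in a..m, s ^ 2 * |h s|) ≤ m * ∫ s in a..m, s * |h s| := by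
      rw [← intervalIntegral.integral_const_mul]
      refine intervalIntegral.integral_mono_on ham (hint2 a m le_rfl ham)
        ((hint a m le_rfl ham).const_mul m) fun s hs => ?_
      have hs0 : 0 < s := lt_of_lt_of_le ha hs.1
      have habs : (0:ℝ) ≤ |h s| := abs_nonneg _
      calc s ^ 2 * |h s| = s * (s * |h s|) := by ring
        _ ≤ m * (s * |h s|) := mul_le_mul_of_nonneg_right hs.2 (mul_nonneg hs0.le habs)
    have b2 : (∫ s in m..x, s ^ 2 * |h s|) ≤ x * ∫ s in m..x, s * |h s| := by
      rw [← intervalIntegral.integral_const_mul]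
      refine intervalIntegral.integral_mono_on hmx (hint2 m x ham hmx)
        ((hint m x ham hmx).const_mul x) fun s hs => ?_
      have hs0 : 0 < s := lt_of_lt_of_le (lt_of_lt_of_le ha ham) hs.1
      have habs : (0:ℝ) ≤ |h s| := abs_nonneg _
      calc s ^ 2 * |h s| = s * (s * |h s|) := by ring
        _ ≤ x * (s * |h s|) := mul_le_mul_of_nonneg_right hs.2 (mul_nonneg hs0.le habs)
    calc |x * z' x| ≤ x⁻¹ * ∫ s in a..x, s ^ 2 * |h s| := step1
      _ = x⁻¹ * ((∫ s in a..m, s ^ 2 * |h s|) + ∫ s in m..x, s ^ 2 * |h s|) := by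
          rw [hsplit]
      _ ≤ x⁻¹ * ((m * ∫ s in a..m, s * |h s|) + x * ∫ s in m..x, s * |h s|) := by
          exact mul_le_mul_of_nonneg_left (add_le_add b1 b2) (inv_nonneg.2 hx0.le)
      _ = (m / x) * (∫ s in a..m, s * |h s|) + ∫ s in m..x, s * |h s| := by
          field_simp
      _ = Real.sqrt (a / x) * (∫ s in a..m, s * |h s|) + ∫ s in m..x, s * |h s| := by
          rw [hsqrt]
  -- the RHS tends to 0
  have hsqrt_top : Tendsto Real.sqrt atTop atTop := by
    rw [tendsto_atTop_atTop]
    intro b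
    refine ⟨max 0 (b ^ 2), fun x hx => ?_⟩
    calc b ≤ |b| := le_abs_self b
      _ = Real.sqrt (b ^ 2) := (Real.sqrt_sq_eq_abs b).symm
      _ ≤ Real.sqrt x := Real.sqrt_le_sqrt (le_trans (le_max_right _ _) hx)
  have hmtop : Tendsto (fun x : ℝ => Real.sqrt (a * x)) atTop atTop :=
    hsqrt_top.comp (Tendsto.const_mul_atTop ha tendsto_id)
  have hF : Tendsto (fun t : ℝ => ∫ s in a..t, s * |h s|) atTop
      (𝓝 (∫ s in Ioi a, s * |h s|)) :=
    MeasureTheory.intervalIntegral_tendsto_integral_Ioi a hh tendsto_id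
  have term1 : Tendsto (fun x => Real.sqrt (a / x) * ∫ s in a..Real.sqrt (a * x), s * |h s|)
      atTop (𝓝 0) := by
    have hs0 : Tendsto (fun x : ℝ => Real.sqrt (a / x)) atTop (𝓝 0) := by
      have : Tendsto (fun x : ℝ => a / x) atTop (𝓝 0) := tendsto_const_nhds.div_atTop tendsto_id
      have := (Real.continuous_sqrt.tendsto 0).comp this
      simpa [Function.comp_def] using this
    have hI : Tendsto (fun x : ℝ => ∫ s in a..Real.sqrt (a * x), s * |h s|) atTop
        (𝓝 (∫ s in Ioi a, s * |h s|)) := hF.comp hmtop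
    simpa using hs0.mul hI
  have term2 : Tendsto (fun x => ∫ s in Real.sqrt (a * x)..x, s * |h s|) atTop (𝓝 0) := by
    have hdiff : Tendsto (fun x : ℝ => (∫ s in a..x, s * |h s|)
        - ∫ s in a..Real.sqrt (a * x), s * |h s|) atTop (𝓝 0) := by
      have := hF.sub (hF.comp hmtop)
      simpa using this
    refine hdiff.congr' ?_
    filter_upwards [eventually_ge_atTop a] with x hx
    have hx0 : 0 < x := lt_of_lt_of_le ha hx
    have ham : a ≤ Real.sqrt (a * x) := by
      have h1 : Real.sqrt (a * a) ≤ Real.sqrt (a * x) := Real.sqrt_le_sqrt (by nlinarith)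
      rwa [Real.sqrt_mul_self ha.le] at h1
    exact intervalIntegral.integral_interval_sub_left (hint a x le_rfl hx)
      (hint a _ le_rfl ham)
  have hRHS : Tendsto (fun x => Real.sqrt (a / x) * (∫ s in a..Real.sqrt (a * x), s * |h s|) +
      ∫ s in Real.sqrt (a * x)..x, s * |h s|) atTop (𝓝 0) := by
    simpa using term1.add term2
  refine ⟨?_, key, hRHS⟩
  rw [tendsto_zero_iff_abs_tendsto_zero]
  exact squeeze_zero' (by filter_upwards with x; exact abs_nonneg _)
    (by filter_upwards [eventually_ge_atTop a] with x hx; exact key x hx) hRHS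
end
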